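/- arXiv:math/0203116 — 6 statements merged into one kernel-verified Lean document; each statement's English description precedes it below -/
import Mathlib

section
/- Every finitely generated projective module over a (not necessarily commutative) principal ideal domain is free. -/
/-!
Over a domain `S` whose left ideals are principal, every submodule `N` of `Sⁿ` is free, by
induction on `n`: the last coordinate maps `N` onto a left ideal `S a`, which is free (`x ↦ x a`
is injective since `S` has no zero divisors), hence projective, so `N` splits as that ideal times
the kernel, and the kernel embeds into `Sⁿ⁻¹`. A finitely generated projective module is a direct
summand of some `Sⁿ`, hence isomorphic to a submodule of it. Right modules over `R` are left
modules over `Rᵐᵒᵖ`, whose left ideals are the right ideals of `R`.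
-/

open LinearMap

theorem Module.free_of_surjective_of_free_ker {R N P : Type*} [Ring R]
    [AddCommGroup N] [Module R N] [AddCommGroup P] [Module R P] [Module.Free R P]
    (f : N →ₗ[R] P) (hf : Function.Surjective f) [Module.Free R (ker f)] :
    Module.Free R N := by
  obtain ⟨l, hl⟩ := f.exists_rightInverse_of_surjective (range_eq_top_of_surjective f hf)
  obtain ⟨e, -⟩ := (exact_subtype_ker_map f).splitSurjectiveEquiv (ker f).injective_subtype ⟨l, hl⟩
  exact Module.Free.of_equiv e.symm

theorem Submodule.IsPrincipal.free {S : Type*} [Ring S] [NoZeroDivisors S]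
    {I : Submodule S S} (hI : I.IsPrincipal) : Module.Free S I := by
  obtain ⟨a, rfl⟩ := hI
  rcases eq_or_ne a 0 with rfl | ha
  · rw [span_zero_singleton]
    exact Module.Free.of_subsingleton S _
  have hinj : Function.Injective (toSpanSingleton S S a) := fun _ _ => mul_right_cancel₀ ha
  rw [LinearMap.span_singleton_eq_range]
  exact Module.Free.of_equiv (LinearEquiv.ofInjective _ hinj)

theorem Module.Free.of_injective_of_forall_free_submodule {R N M : Type*} [Semiring R]
    [AddCommMonoid N] [Module R N] [AddCommMonoid M] [Module R M]
    (hM : ∀ P : Submodule R M, Module.Free R P) (g : N →ₗ[R] M) (hg : Function.Injective g) :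
    Module.Free R N :=
  have := hM (range g)
  Module.Free.of_equiv (LinearEquiv.ofInjective g hg).symm

theorem Submodule.free_of_forall_isPrincipal {S : Type*} [Ring S] [NoZeroDivisors S]
    (hS : ∀ I : Submodule S S, I.IsPrincipal) (n : ℕ) (N : Submodule S (Fin n → S)) :
    Module.Free S N := by
  induction n with
  | zero => exact Module.Free.of_subsingleton S N
  | succ n ih =>
    let π : N →ₗ[S] S := (proj (Fin.last n)).comp N.subtype
    have := (hS (range π)).free
    have : Module.Free S (ker π.rangeRestrict) := by
      refine Module.Free.of_injective_of_forall_free_submodule ih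
        (funLeft S S Fin.castSucc ∘ₗ N.subtype ∘ₗ (ker π.rangeRestrict).subtype) ?_
      refine (injective_iff_map_eq_zero _).2 fun ⟨⟨x, _⟩, hx⟩ hx0 => ?_
      have hlast : x (Fin.last n) = 0 := by simpa [π] using hx
      have hinit : ∀ i : Fin n, x i.castSucc = 0 := congrFun hx0
      ext i
      exact Fin.lastCases hlast hinit i
    exact Module.free_of_surjective_of_free_ker π.rangeRestrict π.surjective_rangeRestrict

theorem projective_module_over_noncommutative_pid_is_free_general
    (R : Type*) [Ring R] [IsDomain R]
    (hright : ∀ I : Submodule Rᵐᵒᵖ Rᵐᵒᵖ, I.IsPrincipal)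
    (M : Type*) [AddCommGroup M] [Module Rᵐᵒᵖ M]
    [Module.Finite Rᵐᵒᵖ M] [Module.Projective Rᵐᵒᵖ M] :
    Module.Free Rᵐᵒᵖ M := by
  obtain ⟨n, -, g, -, hg, -⟩ := Module.Finite.exists_comp_eq_id_of_projective Rᵐᵒᵖ M
  exact Module.Free.of_injective_of_forall_free_submodule
    (Submodule.free_of_forall_isPrincipal hright n) g hg

theorem projective_module_over_noncommutative_pid_is_free
    (R : Type*) [Ring R] [IsDomain R]
    (hleft : ∀ I : Submodule R R, I.IsPrincipal)
    (hright : ∀ I : Submodule Rᵐᵒᵖ Rᵐᵒᵖ, I.IsPrincipal)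
    (M : Type*) [AddCommGroup M] [Module Rᵐᵒᵖ M]
    [Module.Finite Rᵐᵒᵖ M] [Module.Projective Rᵐᵒᵖ M] :
    Module.Free Rᵐᵒᵖ M :=
  projective_module_over_noncommutative_pid_is_free_general R hright M
end

section
/- Let L/K be a finite Galois field extension with Galois group Γ. Then the smash product (crossed product) algebra L#Γ is a simple K-algebra. -/
/-!
Write elements of `A = ⊕_{g ∈ G} L·u g` in the basis `u g`. A nonzero two-sided ideal `I`
contains a nonzero `x` of smallest support, and after multiplying on the right by a unit `u g`
that support contains `1`. For `t ∈ L` the element `i t * x - x * i t ∈ I` has `g`-coefficient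
`(t - g • t) * x_g`, so its support lies in that of `x` minus `1`, and by minimality it is zero.
As `G` acts faithfully on `L`, the support of `x` is `{1}`: `x` is a nonzero element of `i(L)`,
hence a unit, and `I = ⊤`.
-/

namespace CrossedProduct

variable {G L A : Type*} [Group G] [Field L] [Ring A] [Module L A]
  {i : L →+* A} {u : G →* Aˣ} {b : Module.Basis G L A}

theorem isScalarTower_of_smul_eq_mul (hsmul : ∀ (a : L) (x : A), a • x = i a * x) :
    IsScalarTower L A A :=
  ⟨fun a x y => by simp only [smul_eq_mul, hsmul, mul_assoc]⟩

theorem repr_mul_unit (hsmul : ∀ (a : L) (x : A), a • x = i a * x)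
    (hb : ∀ g, b g = (u g : A)) (x : A) (g : G) :
    b.repr (x * u g) = (b.repr x).equivMapDomain (Equiv.mulRight g) := by
  have := isScalarTower_of_smul_eq_mul hsmul
  suffices b.repr.toLinearMap ∘ₗ LinearMap.mulRight L (u g : A) =
      (Finsupp.domLCongr (Equiv.mulRight g)).toLinearMap ∘ₗ b.repr.toLinearMap from
    LinearMap.congr_fun this x
  refine b.ext fun k => ?_
  change b.repr (b k * u g) =
    (Finsupp.domLCongr (Equiv.mulRight g) : (G →₀ L) ≃ₗ[L] _) (b.repr (b k))
  rw [b.repr_self, Finsupp.domLCongr_single, hb k, ← Units.val_mul, ← map_mul, ← hb,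
    b.repr_self, Equiv.coe_mulRight]

theorem repr_mul_map [MulSemiringAction G L] (hsmul : ∀ (a : L) (x : A), a • x = i a * x)
    (hconj : ∀ (g : G) (a : L), (u g : A) * i a = i (g • a) * u g)
    (hb : ∀ g, b g = (u g : A)) (x : A) (t : L) (g : G) :
    b.repr (x * i t) g = (g • t) * b.repr x g := by
  classical
  have := isScalarTower_of_smul_eq_mul hsmul
  suffices b.coord g ∘ₗ LinearMap.mulRight L (i t) = (g • t) • b.coord g from
    LinearMap.congr_fun this x
  refine b.ext fun k => ?_
  change b.repr (b k * i t) g = (g • t) * b.repr (b k) g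
  rw [hb k, hconj, ← hb, ← hsmul, map_smul, b.repr_self, Finsupp.smul_apply, smul_eq_mul,
    Finsupp.single_apply]
  obtain rfl | hkg := eq_or_ne k g
  · rfl
  · rw [if_neg hkg, mul_zero, mul_zero]

theorem repr_commutator [MulSemiringAction G L] (hsmul : ∀ (a : L) (x : A), a • x = i a * x)
    (hconj : ∀ (g : G) (a : L), (u g : A) * i a = i (g • a) * u g)
    (hb : ∀ g, b g = (u g : A)) (x : A) (t : L) (g : G) :
    b.repr (i t * x - x * i t) g = (t - g • t) * b.repr x g := by
  rw [map_sub, Finsupp.sub_apply, ← hsmul, map_smul, Finsupp.smul_apply, smul_eq_mul,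
    repr_mul_map hsmul hconj hb, sub_mul]

theorem eq_map_of_support_subset_one (hsmul : ∀ (a : L) (x : A), a • x = i a * x)
    (hb : ∀ g, b g = (u g : A)) {x : A} (hx : (b.repr x).support ⊆ {1}) :
    x = i (b.repr x 1) := by
  conv_lhs => rw [← b.repr.symm_apply_apply x, Finsupp.support_subset_singleton.mp hx]
  rw [Module.Basis.repr_symm_single, hsmul, hb, map_one u, Units.val_one, mul_one]

theorem exists_one_mem_support_repr_mul_unit (hsmul : ∀ (a : L) (x : A), a • x = i a * x)
    (hb : ∀ g, b g = (u g : A)) {x : A} (hx : x ≠ 0) :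
    ∃ g : G, 1 ∈ (b.repr (x * u g)).support ∧
      (b.repr (x * u g)).support.card = (b.repr x).support.card := by
  obtain ⟨g, hg⟩ : (b.repr x).support.Nonempty := by simpa using hx
  refine ⟨g⁻¹, ?_, ?_⟩ <;> rw [repr_mul_unit hsmul hb]
  · simpa using hg
  · exact Finset.card_map _

theorem support_repr_commutator_subset [DecidableEq G] [MulSemiringAction G L]
    (hsmul : ∀ (a : L) (x : A), a • x = i a * x)
    (hconj : ∀ (g : G) (a : L), (u g : A) * i a = i (g • a) * u g)
    (hb : ∀ g, b g = (u g : A)) (x : A) (t : L) :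
    (b.repr (i t * x - x * i t)).support ⊆ (b.repr x).support.erase 1 := by
  intro k hk
  rw [Finsupp.mem_support_iff, repr_commutator hsmul hconj hb] at hk
  refine Finset.mem_erase.mpr ⟨?_, Finsupp.mem_support_iff.mpr (right_ne_zero_of_mul hk)⟩
  rintro rfl
  exact hk (by rw [one_smul, sub_self, zero_mul])

theorem exists_map_mem_of_ne_zero [MulSemiringAction G L] [FaithfulSMul G L]
    (hsmul : ∀ (a : L) (x : A), a • x = i a * x)
    (hconj : ∀ (g : G) (a : L), (u g : A) * i a = i (g • a) * u g)
    (hb : ∀ g, b g = (u g : A)) (I : TwoSidedIdeal A) {x : A} (hxI : x ∈ I) (hx : x ≠ 0) :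
    ∃ r : L, r ≠ 0 ∧ i r ∈ I := by
  classical
  induction hn : (b.repr x).support.card using Nat.strong_induction_on generalizing x with
  | _ n ih =>
  obtain ⟨g, hy1, hyn⟩ := exists_one_mem_support_repr_mul_unit hsmul hb hx
  set y := x * (u g : A)
  have hyI : y ∈ I := I.mul_mem_right _ _ hxI
  by_cases hsupp : (b.repr y).support ⊆ {1}
  · exact ⟨b.repr y 1, Finsupp.mem_support_iff.mp hy1,
      eq_map_of_support_subset_one hsmul hb hsupp ▸ hyI⟩
  obtain ⟨h, hh, hh1⟩ := Finset.not_subset.mp hsupp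
  obtain ⟨t, ht⟩ : ∃ t : L, h • t ≠ t := by
    by_contra! hfix
    exact hh1 (Finset.mem_singleton.mpr (FaithfulSMul.eq_of_smul_eq_smul fun t => by
      rw [hfix, one_smul]))
  have hz : b.repr (i t * y - y * i t) h ≠ 0 := by
    rw [repr_commutator hsmul hconj hb]
    exact mul_ne_zero (sub_ne_zero.mpr ht.symm) (Finsupp.mem_support_iff.mp hh)
  refine ih _ ?_ (I.sub_mem (I.mul_mem_left _ _ hyI) (I.mul_mem_right _ _ hyI))
    (fun hz0 => hz (by rw [hz0, map_zero, Finsupp.zero_apply])) rfl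
  calc _ ≤ ((b.repr y).support.erase 1).card :=
        Finset.card_le_card (support_repr_commutator_subset hsmul hconj hb y t)
    _ < n := hn ▸ hyn ▸ Finset.card_erase_lt_of_mem hy1

theorem isSimpleRing [MulSemiringAction G L] [FaithfulSMul G L]
    (hsmul : ∀ (a : L) (x : A), a • x = i a * x)
    (hconj : ∀ (g : G) (a : L), (u g : A) * i a = i (g • a) * u g)
    (hb : ∀ g, b g = (u g : A)) : IsSimpleRing A := by
  have : Nontrivial A := ⟨⟨b 1, 0, b.ne_zero 1⟩⟩
  refine .of_eq_bot_or_eq_top fun I => ?_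
  by_cases hI : ∃ x ∈ I, x ≠ 0
  · obtain ⟨x, hxI, hx⟩ := hI
    obtain ⟨r, hr, hrI⟩ := exists_map_mem_of_ne_zero hsmul hconj hb I hxI hx
    have h1 := I.mul_mem_left (i r⁻¹) _ hrI
    rw [← map_mul, inv_mul_cancel₀ hr, map_one] at h1
    exact .inr (I.eq_top h1)
  · push Not at hI
    exact .inl (TwoSidedIdeal.ext fun x => ⟨hI x, fun hx => hx ▸ I.zero_mem⟩)

end CrossedProduct

theorem smash_product_of_galois_extension_is_simple_general
    (K L : Type*) [Field K] [Field L] [Algebra K L]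
    (A : Type*) [Ring A] [Algebra K A]
    (i : L →ₐ[K] A) (u : (L ≃ₐ[K] L) → Aˣ)
    (hu_mul : ∀ γ δ : L ≃ₐ[K] L, u (γ * δ) = u γ * u δ)
    (hconj : ∀ (γ : L ≃ₐ[K] L) (a : L), (u γ : A) * i a = i (γ a) * (u γ : A))
    [Module L A]
    (hsmul : ∀ (a : L) (x : A), a • x = i a * x)
    (b : Module.Basis (L ≃ₐ[K] L) L A)
    (hb : ∀ γ : L ≃ₐ[K] L, b γ = (u γ : A)) :
    IsSimpleRing A :=
  CrossedProduct.isSimpleRing (i := (i : L →+* A)) (u := MonoidHom.mk' u hu_mul) hsmul hconj hb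

theorem smash_product_of_galois_extension_is_simple
    (K L : Type*) [Field K] [Field L] [Algebra K L]
    [FiniteDimensional K L] [IsGalois K L]
    (A : Type*) [Ring A] [Algebra K A]
    (i : L →ₐ[K] A) (u : (L ≃ₐ[K] L) → Aˣ)
    (hu_one : u 1 = 1)
    (hu_mul : ∀ γ δ : L ≃ₐ[K] L, u (γ * δ) = u γ * u δ)
    (hconj : ∀ (γ : L ≃ₐ[K] L) (a : L), (u γ : A) * i a = i (γ a) * (u γ : A))
    [Module L A]
    (hsmul : ∀ (a : L) (x : A), a • x = i a * x)
    (b : Module.Basis (L ≃ₐ[K] L) L A)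
    (hb : ∀ γ : L ≃ₐ[K] L, b γ = (u γ : A)) :
    IsSimpleRing A :=
  smash_product_of_galois_extension_is_simple_general K L A i u hu_mul hconj hsmul b hb
end

section
/- The bigraded algebra Q = C⟨x,z,y,w⟩#μ_m / ⟨[x,z]=[y,z]=[z,w]=[y,w]=[x,w]=0, [y,x]=τ·zw⟩, with deg x = deg z = (1,0), deg y = deg w = (0,1), has bigraded components of dimension dim_C Q_{i,j} = (i+1)(j+1)·m for all i, j ≥ 0. -/
/-!
STATEMENT 9: The bigraded algebra
`Q = ℂ⟨x,z,y,w⟩#μ_m / ⟨[x,z]=[y,z]=[z,w]=[y,w]=[x,w]=0, [y,x]=τ·zw⟩`, with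
`deg x = deg z = (1,0)`, `deg y = deg w = (0,1)` and `deg γ = (0,0)` for
`γ ∈ μ_m`, has bigraded components of dimension
`dim_ℂ Q_{i,j} = (i+1)(j+1)·m` for all `i, j ≥ 0`.

The bigraded component `Q_{i,j}` is realized as the linear span of the images
of all words in the generators of total bidegree `(i,j)`.
-/

noncomputable section

abbrev muGroup (m : ℕ) := Multiplicative (ZMod m)

abbrev CGrp (m : ℕ) := MonoidAlgebra ℂ (muGroup m)

/-- The primitive character `χ(g) = ε^g`. -/
def chi (m : ℕ) (ε : ℂ) (g : muGroup m) : ℂ := ε ^ (Multiplicative.toAdd g).val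

/-- Generators of the noncommutative quadric algebra `Q`:
`x`, `z`, `y`, `w` and the group elements of `μ_m`. -/
inductive QGen (m : ℕ)
  | X : QGen m
  | Z : QGen m
  | Y : QGen m
  | W : QGen m
  | G : muGroup m → QGen m

/-- The image of an element of the group algebra `ℂΓ` in the free algebra. -/
def ofGrpQ (m : ℕ) (t : CGrp m) : FreeAlgebra ℂ (QGen m) :=
  t.coeff.sum fun g a => a • FreeAlgebra.ι ℂ (QGen.G g)

/-- The defining relations of the noncommutative quadric algebra
`Q = ℂ⟨x,z,y,w⟩#μ_m / ⟨[x,z]=[y,z]=[z,w]=[y,w]=[x,w]=0, [y,x]=τ·zw⟩`. -/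
inductive QRel (m : ℕ) (ε : ℂ) (τ : CGrp m) :
    FreeAlgebra ℂ (QGen m) → FreeAlgebra ℂ (QGen m) → Prop
  | grp_mul (g h : muGroup m) :
      QRel m ε τ (FreeAlgebra.ι ℂ (QGen.G g) * FreeAlgebra.ι ℂ (QGen.G h))
        (FreeAlgebra.ι ℂ (QGen.G (g * h)))
  | grp_one : QRel m ε τ (FreeAlgebra.ι ℂ (QGen.G 1)) 1
  | gx (g : muGroup m) :
      QRel m ε τ (FreeAlgebra.ι ℂ (QGen.G g) * FreeAlgebra.ι ℂ QGen.X)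
        (chi m ε g • (FreeAlgebra.ι ℂ QGen.X * FreeAlgebra.ι ℂ (QGen.G g)))
  | gy (g : muGroup m) :
      QRel m ε τ (FreeAlgebra.ι ℂ (QGen.G g) * FreeAlgebra.ι ℂ QGen.Y)
        ((chi m ε g)⁻¹ • (FreeAlgebra.ι ℂ QGen.Y * FreeAlgebra.ι ℂ (QGen.G g)))
  | gz (g : muGroup m) :
      QRel m ε τ (FreeAlgebra.ι ℂ (QGen.G g) * FreeAlgebra.ι ℂ QGen.Z)
        (FreeAlgebra.ι ℂ QGen.Z * FreeAlgebra.ι ℂ (QGen.G g))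
  | gw (g : muGroup m) :
      QRel m ε τ (FreeAlgebra.ι ℂ (QGen.G g) * FreeAlgebra.ι ℂ QGen.W)
        (FreeAlgebra.ι ℂ QGen.W * FreeAlgebra.ι ℂ (QGen.G g))
  | xz : QRel m ε τ (FreeAlgebra.ι ℂ QGen.X * FreeAlgebra.ι ℂ QGen.Z)
        (FreeAlgebra.ι ℂ QGen.Z * FreeAlgebra.ι ℂ QGen.X)
  | yz : QRel m ε τ (FreeAlgebra.ι ℂ QGen.Y * FreeAlgebra.ι ℂ QGen.Z)
        (FreeAlgebra.ι ℂ QGen.Z * FreeAlgebra.ι ℂ QGen.Y)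
  | zw : QRel m ε τ (FreeAlgebra.ι ℂ QGen.Z * FreeAlgebra.ι ℂ QGen.W)
        (FreeAlgebra.ι ℂ QGen.W * FreeAlgebra.ι ℂ QGen.Z)
  | yw : QRel m ε τ (FreeAlgebra.ι ℂ QGen.Y * FreeAlgebra.ι ℂ QGen.W)
        (FreeAlgebra.ι ℂ QGen.W * FreeAlgebra.ι ℂ QGen.Y)
  | xw : QRel m ε τ (FreeAlgebra.ι ℂ QGen.X * FreeAlgebra.ι ℂ QGen.W)
        (FreeAlgebra.ι ℂ QGen.W * FreeAlgebra.ι ℂ QGen.X)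
  | comm : QRel m ε τ (FreeAlgebra.ι ℂ QGen.Y * FreeAlgebra.ι ℂ QGen.X)
        (FreeAlgebra.ι ℂ QGen.X * FreeAlgebra.ι ℂ QGen.Y +
          ofGrpQ m τ * FreeAlgebra.ι ℂ QGen.Z * FreeAlgebra.ι ℂ QGen.W)

/-- The noncommutative quadric algebra `Q`. -/
abbrev NQuadric (m : ℕ) (ε : ℂ) (τ : CGrp m) := RingQuot (QRel m ε τ)

/-- The image of a generator in `Q`. -/
def qgen (m : ℕ) (ε : ℂ) (τ : CGrp m) (s : QGen m) : NQuadric m ε τ :=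
  RingQuot.mkAlgHom ℂ (QRel m ε τ) (FreeAlgebra.ι ℂ s)

def qX (m : ℕ) (ε : ℂ) (τ : CGrp m) : NQuadric m ε τ := qgen m ε τ QGen.X
def qZ (m : ℕ) (ε : ℂ) (τ : CGrp m) : NQuadric m ε τ := qgen m ε τ QGen.Z
def qY (m : ℕ) (ε : ℂ) (τ : CGrp m) : NQuadric m ε τ := qgen m ε τ QGen.Y
def qW (m : ℕ) (ε : ℂ) (τ : CGrp m) : NQuadric m ε τ := qgen m ε τ QGen.W
def qG (m : ℕ) (ε : ℂ) (τ : CGrp m) (g : muGroup m) : NQuadric m ε τ :=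
  qgen m ε τ (QGen.G g)

/-- The bidegree of a generator. -/
def qdeg (m : ℕ) : QGen m → ℕ × ℕ
  | QGen.X => (1, 0)
  | QGen.Z => (1, 0)
  | QGen.Y => (0, 1)
  | QGen.W => (0, 1)
  | QGen.G _ => (0, 0)

/-- The bigraded component `Q_{i,j}`: the span of the images of all words in
the generators of total bidegree `(i,j)`. -/
def qComponent (m : ℕ) (ε : ℂ) (τ : CGrp m) (i j : ℕ) :
    Submodule ℂ (NQuadric m ε τ) :=
  Submodule.span ℂ
    {q : NQuadric m ε τ | ∃ l : List (QGen m),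
      (l.map (qdeg m)).sum = (i, j) ∧ q = (l.map (qgen m ε τ)).prod}

/-!
The monomials `x^a z^c y^b w^d γ` with `a + c = i`, `b + d = j` and `γ ∈ μ_m` form a basis of
`Q_{i,j}`; there are `(i+1)(j+1)m` of them.

They span: left multiplication by a generator sends such a monomial into the span of monomials of
the shifted bidegree. Only `y` is not immediate; there one uses `y x = x y + τ z w` and inducts on
the power of `x`, using that group elements move to the right past `x`, `z`, `y`, `w` at the
cost of the scalars `χ(γ)^{±1}`.

They are independent: `Q` acts on the space with basis `ℕ⁴ × μ_m` by the normal-ordering formulas,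
and the monomial with exponents `(a, c, b, d)` and group part `γ` sends the basis vector
`(0, 0, 0, 0, 1)` to `(a, c, b, d, γ)`.
-/

theorem mul_pow_eq_smul_of_mul_eq_smul {R A : Type*} [CommSemiring R] [Semiring A] [Algebra R A]
    {g x : A} {c : R} (h : g * x = c • (x * g)) (n : ℕ) : g * x ^ n = c ^ n • (x ^ n * g) := by
  induction n with
  | zero => simp
  | succ n ih =>
    rw [pow_succ, ← mul_assoc, ih, smul_mul_assoc, mul_assoc, h, mul_smul_comm, smul_smul,
      ← mul_assoc, ← pow_succ, pow_succ]

theorem AlgHom.map_ofGrpQ {m : ℕ} {A : Type*} [Semiring A] [Algebra ℂ A]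
    (φ : FreeAlgebra ℂ (QGen m) →ₐ[ℂ] A) (t : CGrp m) :
    φ (ofGrpQ m t) = t.coeff.sum fun g a => a • φ (FreeAlgebra.ι ℂ (QGen.G g)) := by
  simp only [ofGrpQ, map_finsuppSum, map_smul]

open Finset.HasAntidiagonal

namespace NQuadric

section Character

variable {m : ℕ} {ε : ℂ}

theorem chi_one : chi m ε 1 = 1 := by
  simp [chi]

theorem chi_mul [NeZero m] (hε : ε ^ m = 1) (g h : muGroup m) :
    chi m ε (g * h) = chi m ε g * chi m ε h := by
  rw [chi, toAdd_mul, ZMod.val_add, ← pow_eq_pow_mod _ hε, pow_add, chi, chi]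

theorem chi_ne_zero [NeZero m] (hε : ε ^ m = 1) (g : muGroup m) : chi m ε g ≠ 0 :=
  pow_ne_zero _ (by rintro rfl; simp [NeZero.ne m] at hε)

end Character

section Relations

variable {m : ℕ} {ε : ℂ} {τ : CGrp m}

theorem qG_mul_qG (g h : muGroup m) : qG m ε τ g * qG m ε τ h = qG m ε τ (g * h) := by
  have hrel := RingQuot.mkAlgHom_rel ℂ (QRel.grp_mul (ε := ε) (τ := τ) g h)
  rwa [map_mul] at hrel

theorem qG_one : qG m ε τ 1 = 1 := by
  have hrel := RingQuot.mkAlgHom_rel ℂ (QRel.grp_one (ε := ε) (τ := τ))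
  rwa [map_one] at hrel

theorem qG_mul_qX (g : muGroup m) :
    qG m ε τ g * qX m ε τ = chi m ε g • (qX m ε τ * qG m ε τ g) := by
  have hrel := RingQuot.mkAlgHom_rel ℂ (QRel.gx (ε := ε) (τ := τ) g)
  rwa [map_mul, map_smul, map_mul] at hrel

theorem qG_mul_qY (g : muGroup m) :
    qG m ε τ g * qY m ε τ = (chi m ε g)⁻¹ • (qY m ε τ * qG m ε τ g) := by
  have hrel := RingQuot.mkAlgHom_rel ℂ (QRel.gy (ε := ε) (τ := τ) g)
  rwa [map_mul, map_smul, map_mul] at hrel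

theorem commute_qG_qZ (g : muGroup m) : Commute (qG m ε τ g) (qZ m ε τ) := by
  have hrel := RingQuot.mkAlgHom_rel ℂ (QRel.gz (ε := ε) (τ := τ) g)
  rwa [map_mul, map_mul] at hrel

theorem commute_qG_qW (g : muGroup m) : Commute (qG m ε τ g) (qW m ε τ) := by
  have hrel := RingQuot.mkAlgHom_rel ℂ (QRel.gw (ε := ε) (τ := τ) g)
  rwa [map_mul, map_mul] at hrel

theorem commute_qX_qZ : Commute (qX m ε τ) (qZ m ε τ) := by
  have hrel := RingQuot.mkAlgHom_rel ℂ (QRel.xz (ε := ε) (τ := τ))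
  rwa [map_mul, map_mul] at hrel

theorem commute_qY_qZ : Commute (qY m ε τ) (qZ m ε τ) := by
  have hrel := RingQuot.mkAlgHom_rel ℂ (QRel.yz (ε := ε) (τ := τ))
  rwa [map_mul, map_mul] at hrel

theorem commute_qZ_qW : Commute (qZ m ε τ) (qW m ε τ) := by
  have hrel := RingQuot.mkAlgHom_rel ℂ (QRel.zw (ε := ε) (τ := τ))
  rwa [map_mul, map_mul] at hrel

theorem commute_qY_qW : Commute (qY m ε τ) (qW m ε τ) := by
  have hrel := RingQuot.mkAlgHom_rel ℂ (QRel.yw (ε := ε) (τ := τ))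
  rwa [map_mul, map_mul] at hrel

theorem commute_qX_qW : Commute (qX m ε τ) (qW m ε τ) := by
  have hrel := RingQuot.mkAlgHom_rel ℂ (QRel.xw (ε := ε) (τ := τ))
  rwa [map_mul, map_mul] at hrel

variable (m ε τ) in
def qGrp (t : CGrp m) : NQuadric m ε τ := t.coeff.sum fun g a => a • qG m ε τ g

theorem qY_mul_qX :
    qY m ε τ * qX m ε τ = qX m ε τ * qY m ε τ + qGrp m ε τ τ * qZ m ε τ * qW m ε τ := by
  have hrel := RingQuot.mkAlgHom_rel ℂ (QRel.comm (ε := ε) (τ := τ))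
  rwa [map_mul, map_add, map_mul, map_mul, map_mul, AlgHom.map_ofGrpQ] at hrel

end Relations

@[ext]
structure PBWIndex (m : ℕ) where
  x : ℕ
  z : ℕ
  y : ℕ
  w : ℕ
  g : muGroup m

section Spanning

variable {m : ℕ} {ε : ℂ} {τ : CGrp m}

variable (m ε τ) in
def pbwMonomial (p : PBWIndex m) : NQuadric m ε τ :=
  qX m ε τ ^ p.x * (qZ m ε τ ^ p.z * (qY m ε τ ^ p.y * (qW m ε τ ^ p.w * qG m ε τ p.g)))

theorem qX_mul_pbwMonomial (a c b d : ℕ) (g : muGroup m) :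
    qX m ε τ * pbwMonomial m ε τ ⟨a, c, b, d, g⟩ = pbwMonomial m ε τ ⟨a + 1, c, b, d, g⟩ := by
  simp only [pbwMonomial, ← mul_assoc, ← pow_succ']

theorem qZ_mul_pbwMonomial (a c b d : ℕ) (g : muGroup m) :
    qZ m ε τ * pbwMonomial m ε τ ⟨a, c, b, d, g⟩ = pbwMonomial m ε τ ⟨a, c + 1, b, d, g⟩ := by
  simp only [pbwMonomial]
  rw [(commute_qX_qZ.symm.pow_right a).left_comm, ← mul_assoc (qZ m ε τ), ← pow_succ']

theorem qW_mul_pbwMonomial (a c b d : ℕ) (g : muGroup m) :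
    qW m ε τ * pbwMonomial m ε τ ⟨a, c, b, d, g⟩ = pbwMonomial m ε τ ⟨a, c, b, d + 1, g⟩ := by
  simp only [pbwMonomial]
  rw [(commute_qX_qW.symm.pow_right a).left_comm, (commute_qZ_qW.symm.pow_right c).left_comm,
    (commute_qY_qW.symm.pow_right b).left_comm, ← mul_assoc (qW m ε τ), ← pow_succ']

theorem qY_mul_pbwMonomial_zero (c b d : ℕ) (g : muGroup m) :
    qY m ε τ * pbwMonomial m ε τ ⟨0, c, b, d, g⟩ = pbwMonomial m ε τ ⟨0, c, b + 1, d, g⟩ := by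
  simp only [pbwMonomial, pow_zero, one_mul]
  rw [(commute_qY_qZ.pow_right c).left_comm, ← mul_assoc (qY m ε τ), ← pow_succ']

theorem qG_mul_pbwMonomial (h : muGroup m) (a c b d : ℕ) (g : muGroup m) :
    qG m ε τ h * pbwMonomial m ε τ ⟨a, c, b, d, g⟩ =
      (chi m ε h ^ a * (chi m ε h)⁻¹ ^ b) • pbwMonomial m ε τ ⟨a, c, b, d, h * g⟩ := by
  simp only [pbwMonomial]
  rw [← mul_assoc, mul_pow_eq_smul_of_mul_eq_smul (qG_mul_qX h), smul_mul_assoc, mul_assoc,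
    ((commute_qG_qZ h).pow_right c).left_comm, ← mul_assoc (qG m ε τ h),
    mul_pow_eq_smul_of_mul_eq_smul (qG_mul_qY h), smul_mul_assoc, mul_assoc,
    ((commute_qG_qW h).pow_right d).left_comm, qG_mul_qG, mul_smul_comm, mul_smul_comm, smul_smul]

def bidegIndex (i j : ℕ) : antidiagonal i × antidiagonal j × muGroup m → PBWIndex m :=
  fun q => ⟨q.1.1.1, q.1.1.2, q.2.1.1.1, q.2.1.1.2, q.2.2⟩

theorem bidegIndex_injective (i j : ℕ) : Function.Injective (bidegIndex (m := m) i j) := by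
  rintro ⟨⟨⟨a, c⟩, _⟩, ⟨⟨b, d⟩, _⟩, g⟩ ⟨⟨⟨a', c'⟩, _⟩, ⟨⟨b', d'⟩, _⟩, g'⟩ h
  simp_all [bidegIndex, PBWIndex.ext_iff]

variable (m ε τ) in
def pbwSpan (i j : ℕ) : Submodule ℂ (NQuadric m ε τ) :=
  Submodule.span ℂ (Set.range (pbwMonomial m ε τ ∘ bidegIndex i j))

theorem pbwMonomial_mem_pbwSpan {a c b d i j : ℕ} (g : muGroup m) (hi : a + c = i)
    (hj : b + d = j) : pbwMonomial m ε τ ⟨a, c, b, d, g⟩ ∈ pbwSpan m ε τ i j :=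
  Submodule.subset_span ⟨(⟨(a, c), mem_antidiagonal.2 hi⟩, ⟨(b, d), mem_antidiagonal.2 hj⟩, g), rfl⟩

theorem mul_mem_pbwSpan {r q : NQuadric m ε τ} {i j i' j' : ℕ}
    (hr : ∀ a c b d g, a + c = i → b + d = j →
      r * pbwMonomial m ε τ ⟨a, c, b, d, g⟩ ∈ pbwSpan m ε τ i' j')
    (hq : q ∈ pbwSpan m ε τ i j) : r * q ∈ pbwSpan m ε τ i' j' := by
  have : pbwSpan m ε τ i j ≤ (pbwSpan m ε τ i' j').comap (LinearMap.mulLeft ℂ r) := by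
    refine Submodule.span_le.2 ?_
    rintro _ ⟨⟨⟨⟨a, c⟩, hac⟩, ⟨⟨b, d⟩, hbd⟩, g⟩, rfl⟩
    exact hr a c b d g (mem_antidiagonal.1 hac) (mem_antidiagonal.1 hbd)
  exact this hq

theorem qX_mul_mem_pbwSpan {q : NQuadric m ε τ} {i j : ℕ} (hq : q ∈ pbwSpan m ε τ i j) :
    qX m ε τ * q ∈ pbwSpan m ε τ (i + 1) j :=
  mul_mem_pbwSpan (fun a c b d g hi hj => by
    rw [qX_mul_pbwMonomial]; exact pbwMonomial_mem_pbwSpan g (by omega) hj) hq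

theorem qGrp_mul_mem_pbwSpan (t : CGrp m) {q : NQuadric m ε τ} {i j : ℕ}
    (hq : q ∈ pbwSpan m ε τ i j) : qGrp m ε τ t * q ∈ pbwSpan m ε τ i j := by
  refine mul_mem_pbwSpan (fun a c b d g hi hj => ?_) hq
  rw [qGrp, Finsupp.sum, Finset.sum_mul]
  refine Submodule.sum_mem _ fun h _ => ?_
  rw [smul_mul_assoc, qG_mul_pbwMonomial]
  exact Submodule.smul_mem _ _ (Submodule.smul_mem _ _ (pbwMonomial_mem_pbwSpan _ hi hj))

theorem qY_mul_pbwMonomial_mem_pbwSpan (a c b d : ℕ) (g : muGroup m) :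
    qY m ε τ * pbwMonomial m ε τ ⟨a, c, b, d, g⟩ ∈ pbwSpan m ε τ (a + c) (b + d + 1) := by
  induction a with
  | zero =>
    rw [qY_mul_pbwMonomial_zero]
    exact pbwMonomial_mem_pbwSpan g rfl (by omega)
  | succ a ih =>
    rw [← qX_mul_pbwMonomial, ← mul_assoc, qY_mul_qX, add_mul, mul_assoc, mul_assoc, mul_assoc,
      qW_mul_pbwMonomial, qZ_mul_pbwMonomial, add_right_comm]
    exact add_mem (qX_mul_mem_pbwSpan ih)
      (qGrp_mul_mem_pbwSpan τ (pbwMonomial_mem_pbwSpan g (by omega) (by omega)))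

theorem qgen_mul_mem_pbwSpan (s : QGen m) {q : NQuadric m ε τ} {i j : ℕ}
    (hq : q ∈ pbwSpan m ε τ i j) :
    qgen m ε τ s * q ∈ pbwSpan m ε τ (i + (qdeg m s).1) (j + (qdeg m s).2) := by
  refine mul_mem_pbwSpan (fun a c b d g hi hj => ?_) hq
  subst hi hj
  cases s with
  | X => rw [← qX, qX_mul_pbwMonomial]; exact pbwMonomial_mem_pbwSpan g (by simp [qdeg]; omega) rfl
  | Z => rw [← qZ, qZ_mul_pbwMonomial]; exact pbwMonomial_mem_pbwSpan g (by simp [qdeg]; omega) rfl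
  | Y => exact qY_mul_pbwMonomial_mem_pbwSpan a c b d g
  | W => rw [← qW, qW_mul_pbwMonomial]; exact pbwMonomial_mem_pbwSpan g rfl (by simp [qdeg]; omega)
  | G h =>
    rw [← qG, qG_mul_pbwMonomial]
    exact Submodule.smul_mem _ _ (pbwMonomial_mem_pbwSpan _ rfl rfl)

theorem list_prod_mem_pbwSpan (l : List (QGen m)) :
    (l.map (qgen m ε τ)).prod ∈
      pbwSpan m ε τ (l.map (qdeg m)).sum.1 (l.map (qdeg m)).sum.2 := by
  induction l with
  | nil =>
    have h1 : pbwMonomial m ε τ ⟨0, 0, 0, 0, 1⟩ = 1 := by simp [pbwMonomial, qG_one]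
    rw [List.map_nil, List.map_nil, List.prod_nil, ← h1]
    exact pbwMonomial_mem_pbwSpan 1 rfl rfl
  | cons s l ih =>
    rw [List.map_cons, List.map_cons, List.prod_cons, List.sum_cons, Prod.fst_add, Prod.snd_add,
      add_comm (qdeg m s).1, add_comm (qdeg m s).2]
    exact qgen_mul_mem_pbwSpan s ih

theorem pbwMonomial_eq_list_prod (a c b d : ℕ) (g : muGroup m) :
    pbwMonomial m ε τ ⟨a, c, b, d, g⟩ =
      ((List.replicate a QGen.X ++ List.replicate c QGen.Z ++ List.replicate b QGen.Y ++
        List.replicate d QGen.W ++ [QGen.G g]).map (qgen m ε τ)).prod := by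
  simp [pbwMonomial, qX, qZ, qY, qW, qG]

theorem qComponent_eq_pbwSpan (i j : ℕ) : qComponent m ε τ i j = pbwSpan m ε τ i j := by
  refine le_antisymm (Submodule.span_le.2 ?_) (Submodule.span_le.2 ?_)
  · rintro _ ⟨l, hl, rfl⟩
    simpa [hl] using list_prod_mem_pbwSpan (ε := ε) (τ := τ) l
  · rintro _ ⟨⟨⟨⟨a, c⟩, hac⟩, ⟨⟨b, d⟩, hbd⟩, g⟩, rfl⟩
    rw [mem_antidiagonal] at hac hbd
    refine Submodule.subset_span ⟨_, ?_, pbwMonomial_eq_list_prod a c b d g⟩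
    simp [qdeg, ← hac, ← hbd]

end Spanning

section Representation

open Finsupp (single linearCombination)

abbrev PBWSpace (m : ℕ) := PBWIndex m →₀ ℂ

variable {m : ℕ} {ε : ℂ} {τ : CGrp m}

variable (m) in
def actX : Module.End ℂ (PBWSpace m) :=
  linearCombination ℂ fun p => single ⟨p.x + 1, p.z, p.y, p.w, p.g⟩ 1

variable (m) in
def actZ : Module.End ℂ (PBWSpace m) :=
  linearCombination ℂ fun p => single ⟨p.x, p.z + 1, p.y, p.w, p.g⟩ 1

variable (m) in
def actW : Module.End ℂ (PBWSpace m) :=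
  linearCombination ℂ fun p => single ⟨p.x, p.z, p.y, p.w + 1, p.g⟩ 1

variable (m ε) in
def actG (h : muGroup m) : Module.End ℂ (PBWSpace m) :=
  linearCombination ℂ fun p =>
    (chi m ε h ^ p.x * (chi m ε h)⁻¹ ^ p.y) • single ⟨p.x, p.z, p.y, p.w, h * p.g⟩ 1

/- `y x^a = x^a y + x^(a-1) (∑ h, τ_h (1 + χ(h) + ⋯ + χ(h)^(a-1)) h) z w`, and moving `h` past
`y^b` costs `χ(h)^(-b)`. For `a = 0` the coefficient is an empty sum, so the truncated `a - 1`
is harmless. -/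
variable (m ε τ) in
def actY : Module.End ℂ (PBWSpace m) :=
  linearCombination ℂ fun p =>
    single ⟨p.x, p.z, p.y + 1, p.w, p.g⟩ 1 +
      τ.coeff.sum fun h t =>
        (t * (∑ s ∈ Finset.range p.x, chi m ε h ^ s) * (chi m ε h)⁻¹ ^ p.y) •
          single ⟨p.x - 1, p.z + 1, p.y, p.w + 1, h * p.g⟩ 1

variable (m ε τ) in
def actGen : QGen m → Module.End ℂ (PBWSpace m)
  | .X => actX m
  | .Z => actZ m
  | .Y => actY m ε τ
  | .W => actW m
  | .G h => actG m ε h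

theorem PBWSpace.endo_ext {f f' : Module.End ℂ (PBWSpace m)}
    (h : ∀ p, f (single p 1) = f' (single p 1)) : f = f' :=
  Finsupp.lhom_ext' fun p => LinearMap.ext_ring (h p)

@[simp]
theorem actX_single (p : PBWIndex m) :
    actX m (single p 1) = single ⟨p.x + 1, p.z, p.y, p.w, p.g⟩ 1 := by
  simp [actX]

@[simp]
theorem actZ_single (p : PBWIndex m) :
    actZ m (single p 1) = single ⟨p.x, p.z + 1, p.y, p.w, p.g⟩ 1 := by
  simp [actZ]

@[simp]
theorem actW_single (p : PBWIndex m) :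
    actW m (single p 1) = single ⟨p.x, p.z, p.y, p.w + 1, p.g⟩ 1 := by
  simp [actW]

@[simp]
theorem actG_single (h : muGroup m) (p : PBWIndex m) :
    actG m ε h (single p 1) =
      (chi m ε h ^ p.x * (chi m ε h)⁻¹ ^ p.y) • single ⟨p.x, p.z, p.y, p.w, h * p.g⟩ 1 := by
  simp only [actG, Finsupp.linearCombination_single, one_smul]

@[simp]
theorem actY_single (p : PBWIndex m) :
    actY m ε τ (single p 1) =
      single ⟨p.x, p.z, p.y + 1, p.w, p.g⟩ 1 +
        τ.coeff.sum fun h t =>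
          (t * (∑ s ∈ Finset.range p.x, chi m ε h ^ s) * (chi m ε h)⁻¹ ^ p.y) •
            single ⟨p.x - 1, p.z + 1, p.y, p.w + 1, h * p.g⟩ 1 := by
  simp only [actY, Finsupp.linearCombination_single, one_smul]

theorem actG_mul_actG [NeZero m] (hε : ε ^ m = 1) (g h : muGroup m) :
    actG m ε g * actG m ε h = actG m ε (g * h) := by
  refine PBWSpace.endo_ext fun ⟨a, c, b, d, u⟩ => ?_
  simp only [Module.End.mul_apply, actG_single, map_smul, smul_smul, chi_mul hε, mul_assoc]
  congr 1
  ring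

theorem actG_one : actG m ε 1 = 1 := by
  refine PBWSpace.endo_ext fun ⟨a, c, b, d, u⟩ => ?_
  simp [chi_one]

theorem actG_mul_actX (g : muGroup m) :
    actG m ε g * actX m = chi m ε g • (actX m * actG m ε g) := by
  refine PBWSpace.endo_ext fun ⟨a, c, b, d, u⟩ => ?_
  simp only [Module.End.mul_apply, LinearMap.smul_apply, actG_single, actX_single, map_smul,
    smul_smul]
  congr 1
  ring

theorem actG_mul_actY [NeZero m] (hε : ε ^ m = 1) (g : muGroup m) :
    actG m ε g * actY m ε τ = (chi m ε g)⁻¹ • (actY m ε τ * actG m ε g) := by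
  refine PBWSpace.endo_ext fun ⟨a, c, b, d, u⟩ => ?_
  simp only [Module.End.mul_apply, LinearMap.smul_apply, actG_single, actY_single, map_smul,
    map_add, map_finsuppSum, smul_add, Finsupp.smul_sum, smul_smul]
  congr 1
  · congr 1
    ring
  · refine Finsupp.sum_congr fun h _ => ?_
    rw [mul_left_comm g h u]
    congr 1
    rcases a with _ | a
    · simp
    · rw [Nat.add_sub_cancel, pow_succ]
      field_simp [chi_ne_zero hε g]

theorem commute_actG_actZ (g : muGroup m) : Commute (actG m ε g) (actZ m) := by
  refine PBWSpace.endo_ext fun ⟨a, c, b, d, u⟩ => ?_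
  simp only [Module.End.mul_apply, actG_single, actZ_single, map_smul]

theorem commute_actG_actW (g : muGroup m) : Commute (actG m ε g) (actW m) := by
  refine PBWSpace.endo_ext fun ⟨a, c, b, d, u⟩ => ?_
  simp only [Module.End.mul_apply, actG_single, actW_single, map_smul]

theorem commute_actX_actZ : Commute (actX m) (actZ m) := by
  refine PBWSpace.endo_ext fun ⟨a, c, b, d, u⟩ => ?_
  simp only [Module.End.mul_apply, actX_single, actZ_single]

theorem commute_actY_actZ : Commute (actY m ε τ) (actZ m) := by
  refine PBWSpace.endo_ext fun ⟨a, c, b, d, u⟩ => ?_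
  simp only [Module.End.mul_apply, actY_single, actZ_single, map_add, map_smul, map_finsuppSum]

theorem commute_actZ_actW : Commute (actZ m) (actW m) := by
  refine PBWSpace.endo_ext fun ⟨a, c, b, d, u⟩ => ?_
  simp only [Module.End.mul_apply, actZ_single, actW_single]

theorem commute_actY_actW : Commute (actY m ε τ) (actW m) := by
  refine PBWSpace.endo_ext fun ⟨a, c, b, d, u⟩ => ?_
  simp only [Module.End.mul_apply, actY_single, actW_single, map_add, map_smul, map_finsuppSum]

theorem commute_actX_actW : Commute (actX m) (actW m) := by
  refine PBWSpace.endo_ext fun ⟨a, c, b, d, u⟩ => ?_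
  simp only [Module.End.mul_apply, actX_single, actW_single]

theorem actY_mul_actX :
    actY m ε τ * actX m =
      actX m * actY m ε τ + (τ.coeff.sum fun h t => t • actG m ε h) * actZ m * actW m := by
  refine PBWSpace.endo_ext fun ⟨a, c, b, d, u⟩ => ?_
  simp only [Module.End.mul_apply, LinearMap.add_apply, actX_single, actY_single, actZ_single,
    actW_single, actG_single, map_add, map_finsuppSum, map_smul, LinearMap.finsupp_sum_apply,
    LinearMap.smul_apply]
  rw [add_assoc, ← Finsupp.sum_add]
  congr 1
  refine Finsupp.sum_congr fun h _ => ?_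
  -- the last term of `∑ s < a + 1, χ(h)^s` is the contribution `χ(h)^a` of `τ z w`
  rcases a with _ | a
  · simp
  · rw [Nat.add_sub_cancel, Nat.sub_add_cancel (Nat.succ_pos a), smul_smul, ← add_smul,
      Finset.sum_range_succ]
    congr 1
    ring

theorem lift_actGen_rel [NeZero m] (hε : ε ^ m = 1) ⦃a b : FreeAlgebra ℂ (QGen m)⦄
    (r : QRel m ε τ a b) :
    FreeAlgebra.lift ℂ (actGen m ε τ) a = FreeAlgebra.lift ℂ (actGen m ε τ) b := by
  cases r <;> simp only [map_mul, map_smul, map_one, map_add, AlgHom.map_ofGrpQ,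
    FreeAlgebra.lift_ι_apply, actGen]
  case grp_mul g h => exact actG_mul_actG hε g h
  case grp_one => exact actG_one
  case gx g => exact actG_mul_actX g
  case gy g => exact actG_mul_actY hε g
  case gz g => exact (commute_actG_actZ g).eq
  case gw g => exact (commute_actG_actW g).eq
  case xz => exact commute_actX_actZ.eq
  case yz => exact commute_actY_actZ.eq
  case zw => exact commute_actZ_actW.eq
  case yw => exact commute_actY_actW.eq
  case xw => exact commute_actX_actW.eq
  case comm => exact actY_mul_actX

variable (m ε τ) in
def pbwRep [NeZero m] (hε : ε ^ m = 1) : NQuadric m ε τ →ₐ[ℂ] Module.End ℂ (PBWSpace m) :=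
  RingQuot.liftAlgHom ℂ ⟨FreeAlgebra.lift ℂ (actGen m ε τ), lift_actGen_rel hε⟩

theorem pbwRep_qgen [NeZero m] (hε : ε ^ m = 1) (s : QGen m) :
    pbwRep m ε τ hε (qgen m ε τ s) = actGen m ε τ s := by
  rw [pbwRep, qgen, RingQuot.liftAlgHom_mkAlgHom_apply, FreeAlgebra.lift_ι_apply]

theorem actX_pow_single (n : ℕ) (p : PBWIndex m) :
    (actX m ^ n) (single p 1) = single ⟨p.x + n, p.z, p.y, p.w, p.g⟩ 1 := by
  induction n with
  | zero => simp
  | succ n ih => simp [pow_succ', ih, add_assoc]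

theorem actZ_pow_single (n : ℕ) (p : PBWIndex m) :
    (actZ m ^ n) (single p 1) = single ⟨p.x, p.z + n, p.y, p.w, p.g⟩ 1 := by
  induction n with
  | zero => simp
  | succ n ih => simp [pow_succ', ih, add_assoc]

theorem actW_pow_single (n : ℕ) (p : PBWIndex m) :
    (actW m ^ n) (single p 1) = single ⟨p.x, p.z, p.y, p.w + n, p.g⟩ 1 := by
  induction n with
  | zero => simp
  | succ n ih => simp [pow_succ', ih, add_assoc]

theorem actY_pow_single_of_x_eq_zero (n c b d : ℕ) (u : muGroup m) :
    (actY m ε τ ^ n) (single ⟨0, c, b, d, u⟩ 1) = single ⟨0, c, b + n, d, u⟩ 1 := by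
  induction n with
  | zero => simp
  | succ n ih => simp [pow_succ', ih, add_assoc]

theorem pbwRep_pbwMonomial_single [NeZero m] (hε : ε ^ m = 1) (p : PBWIndex m) :
    pbwRep m ε τ hε (pbwMonomial m ε τ p) (single ⟨0, 0, 0, 0, 1⟩ 1) = single p 1 := by
  simp [pbwMonomial, qX, qZ, qY, qW, qG, pbwRep_qgen, actGen, actW_pow_single,
    actY_pow_single_of_x_eq_zero, actZ_pow_single, actX_pow_single]

theorem linearIndependent_pbwMonomial [NeZero m] (hε : ε ^ m = 1) :
    LinearIndependent ℂ (pbwMonomial m ε τ) := by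
  refine LinearIndependent.of_comp
    (LinearMap.applyₗ (single ⟨0, 0, 0, 0, 1⟩ 1) ∘ₗ (pbwRep m ε τ hε).toLinearMap) ?_
  convert Finsupp.basisSingleOne.linearIndependent using 1
  funext p
  simp [pbwRep_pbwMonomial_single]

end Representation

end NQuadric

theorem nquadric_bigraded_component_dimension
    (m : ℕ) (hm : 0 < m) (ε : ℂ) (hε : IsPrimitiveRoot ε m) (τ : CGrp m)
    (i j : ℕ) :
    Module.finrank ℂ (qComponent m ε τ i j) = (i + 1) * (j + 1) * m := by
  have : NeZero m := ⟨hm.ne'⟩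
  have hindep := (NQuadric.linearIndependent_pbwMonomial (τ := τ) hε.pow_eq_one).comp _
    (NQuadric.bidegIndex_injective i j)
  rw [NQuadric.qComponent_eq_pbwSpan, NQuadric.pbwSpan, finrank_span_eq_card hindep]
  simp [ZMod.card, mul_assoc]

end
end

section
/- There is an algebra isomorphism B_τ ≅ Q / ((z−1)Q + (w−1)Q), where B_τ = C⟨x,y⟩#μ_m / ⟨[y,x]=τ⟩ and Q is the noncommutative quadric algebra. -/
/-!
STATEMENT 11: There is an algebra isomorphism
`B_τ ≅ Q / ((z−1)Q + (w−1)Q)`, where `B_τ = ℂ⟨x,y⟩#μ_m / ⟨[y,x]=τ⟩` and `Q`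
is the noncommutative quadric algebra.  Since `z` and `w` are central in `Q`,
the right ideal `(z−1)Q + (w−1)Q` is a two-sided ideal, and the quotient ring
is realized as the quotient of `Q` by the relations `z = 1`, `w = 1`.
The isomorphism sends `x ↦ x`, `y ↦ y`, `γ ↦ γ`.
-/

noncomputable section

inductive BGen (m : ℕ)
  | X : BGen m
  | Y : BGen m
  | G : muGroup m → BGen m

/-- The image of an element of the group algebra `ℂΓ` in the free algebra. -/
def ofGrp (m : ℕ) (t : CGrp m) : FreeAlgebra ℂ (BGen m) :=
  t.coeff.sum fun g a => a • FreeAlgebra.ι ℂ (BGen.G g)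

/-- The defining relations of `B_τ = ℂ⟨x,y⟩#μ_m / ⟨[y,x] = τ⟩`. -/
inductive BRel (m : ℕ) (ε : ℂ) (τ : CGrp m) :
    FreeAlgebra ℂ (BGen m) → FreeAlgebra ℂ (BGen m) → Prop
  | grp_mul (g h : muGroup m) :
      BRel m ε τ (FreeAlgebra.ι ℂ (BGen.G g) * FreeAlgebra.ι ℂ (BGen.G h))
        (FreeAlgebra.ι ℂ (BGen.G (g * h)))
  | grp_one : BRel m ε τ (FreeAlgebra.ι ℂ (BGen.G 1)) 1
  | gx (g : muGroup m) :
      BRel m ε τ (FreeAlgebra.ι ℂ (BGen.G g) * FreeAlgebra.ι ℂ BGen.X)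
        (chi m ε g • (FreeAlgebra.ι ℂ BGen.X * FreeAlgebra.ι ℂ (BGen.G g)))
  | gy (g : muGroup m) :
      BRel m ε τ (FreeAlgebra.ι ℂ (BGen.G g) * FreeAlgebra.ι ℂ BGen.Y)
        ((chi m ε g)⁻¹ • (FreeAlgebra.ι ℂ BGen.Y * FreeAlgebra.ι ℂ (BGen.G g)))
  | comm : BRel m ε τ (FreeAlgebra.ι ℂ BGen.Y * FreeAlgebra.ι ℂ BGen.X)
        (FreeAlgebra.ι ℂ BGen.X * FreeAlgebra.ι ℂ BGen.Y + ofGrp m τ)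

/-- The Crawley-Boevey–Holland algebra `B_τ`. -/
abbrev CBH (m : ℕ) (ε : ℂ) (τ : CGrp m) := RingQuot (BRel m ε τ)

def bX (m : ℕ) (ε : ℂ) (τ : CGrp m) : CBH m ε τ :=
  RingQuot.mkAlgHom ℂ (BRel m ε τ) (FreeAlgebra.ι ℂ BGen.X)

def bY (m : ℕ) (ε : ℂ) (τ : CGrp m) : CBH m ε τ :=
  RingQuot.mkAlgHom ℂ (BRel m ε τ) (FreeAlgebra.ι ℂ BGen.Y)

def bG (m : ℕ) (ε : ℂ) (τ : CGrp m) (g : muGroup m) : CBH m ε τ :=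
  RingQuot.mkAlgHom ℂ (BRel m ε τ) (FreeAlgebra.ι ℂ (BGen.G g))

/-- The (linear) embedding of the group algebra `ℂΓ` into `B_τ`. -/
def bOf (m : ℕ) (ε : ℂ) (τ : CGrp m) (t : CGrp m) : CBH m ε τ :=
  RingQuot.mkAlgHom ℂ (BRel m ε τ) (ofGrp m t)


/-- The relations `z = 1`, `w = 1` on `Q`, presenting the quotient of `Q` by
the (two-sided, since `z, w` are central) ideal `(z−1)Q + (w−1)Q`. -/
inductive AffineRel (m : ℕ) (ε : ℂ) (τ : CGrp m) :
    NQuadric m ε τ → NQuadric m ε τ → Prop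
  | z : AffineRel m ε τ (qZ m ε τ) 1
  | w : AffineRel m ε τ (qW m ε τ) 1

/-!
Both algebras are presented by generators and relations, so the isomorphism is a pair of maps
defined on generators. Sending `z, w ↦ 1` turns every defining relation of `Q` into one of
`B_τ` (the commutation relations of `z`, `w` become trivial and `[y,x] = τ zw` becomes
`[y,x] = τ`), so `Q → B_τ` exists and kills `z − 1`, `w − 1`; conversely the relations of
`B_τ` hold in `Q / (z − 1, w − 1)`. The two composites fix the generators.
-/

namespace CBHQuadric

lemma map_ofGrp_eq_map_ofGrpQ {m : ℕ} {A : Type*} [Semiring A] [Algebra ℂ A]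
    (F : FreeAlgebra ℂ (BGen m) →ₐ[ℂ] A) (F' : FreeAlgebra ℂ (QGen m) →ₐ[ℂ] A)
    (hF : ∀ g, F (FreeAlgebra.ι ℂ (BGen.G g)) = F' (FreeAlgebra.ι ℂ (QGen.G g)))
    (t : CGrp m) : F (ofGrp m t) = F' (ofGrpQ m t) := by
  simp only [ofGrp, ofGrpQ, map_finsuppSum, map_smul, hF]

variable (m : ℕ) (ε : ℂ) (τ : CGrp m)

lemma qG_mul_qG (g h : muGroup m) : qG m ε τ g * qG m ε τ h = qG m ε τ (g * h) := by
  simpa [qG, qgen] using RingQuot.mkAlgHom_rel ℂ (QRel.grp_mul (ε := ε) (τ := τ) g h)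

lemma qG_one : qG m ε τ 1 = 1 := by
  simpa [qG, qgen] using RingQuot.mkAlgHom_rel ℂ (QRel.grp_one (m := m) (ε := ε) (τ := τ))

lemma qG_mul_qX (g : muGroup m) :
    qG m ε τ g * qX m ε τ = chi m ε g • (qX m ε τ * qG m ε τ g) := by
  simpa [qG, qX, qgen] using RingQuot.mkAlgHom_rel ℂ (QRel.gx (ε := ε) (τ := τ) g)

lemma qG_mul_qY (g : muGroup m) :
    qG m ε τ g * qY m ε τ = (chi m ε g)⁻¹ • (qY m ε τ * qG m ε τ g) := by
  simpa [qG, qY, qgen] using RingQuot.mkAlgHom_rel ℂ (QRel.gy (ε := ε) (τ := τ) g)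

lemma qY_mul_qX : qY m ε τ * qX m ε τ = qX m ε τ * qY m ε τ +
    RingQuot.mkAlgHom ℂ (QRel m ε τ) (ofGrpQ m τ) * qZ m ε τ * qW m ε τ := by
  simpa [qX, qY, qZ, qW, qgen] using
    RingQuot.mkAlgHom_rel ℂ (QRel.comm (m := m) (ε := ε) (τ := τ))

lemma bG_mul_bG (g h : muGroup m) : bG m ε τ g * bG m ε τ h = bG m ε τ (g * h) := by
  simpa [bG] using RingQuot.mkAlgHom_rel ℂ (BRel.grp_mul (ε := ε) (τ := τ) g h)

lemma bG_one : bG m ε τ 1 = 1 := by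
  simpa [bG] using RingQuot.mkAlgHom_rel ℂ (BRel.grp_one (m := m) (ε := ε) (τ := τ))

lemma bG_mul_bX (g : muGroup m) :
    bG m ε τ g * bX m ε τ = chi m ε g • (bX m ε τ * bG m ε τ g) := by
  simpa [bG, bX] using RingQuot.mkAlgHom_rel ℂ (BRel.gx (ε := ε) (τ := τ) g)

lemma bG_mul_bY (g : muGroup m) :
    bG m ε τ g * bY m ε τ = (chi m ε g)⁻¹ • (bY m ε τ * bG m ε τ g) := by
  simpa [bG, bY] using RingQuot.mkAlgHom_rel ℂ (BRel.gy (ε := ε) (τ := τ) g)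

lemma bY_mul_bX : bY m ε τ * bX m ε τ = bX m ε τ * bY m ε τ + bOf m ε τ τ := by
  simpa [bX, bY, bOf] using RingQuot.mkAlgHom_rel ℂ (BRel.comm (m := m) (ε := ε) (τ := τ))

lemma mkAlgHom_qZ : RingQuot.mkAlgHom ℂ (AffineRel m ε τ) (qZ m ε τ) = 1 := by
  simpa using RingQuot.mkAlgHom_rel ℂ (AffineRel.z (m := m) (ε := ε) (τ := τ))

lemma mkAlgHom_qW : RingQuot.mkAlgHom ℂ (AffineRel m ε τ) (qW m ε τ) = 1 := by
  simpa using RingQuot.mkAlgHom_rel ℂ (AffineRel.w (m := m) (ε := ε) (τ := τ))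

def toQuotientFree : FreeAlgebra ℂ (BGen m) →ₐ[ℂ] RingQuot (AffineRel m ε τ) :=
  FreeAlgebra.lift ℂ fun
    | .X => RingQuot.mkAlgHom ℂ (AffineRel m ε τ) (qX m ε τ)
    | .Y => RingQuot.mkAlgHom ℂ (AffineRel m ε τ) (qY m ε τ)
    | .G g => RingQuot.mkAlgHom ℂ (AffineRel m ε τ) (qG m ε τ g)

lemma toQuotientFree_rel ⦃a b : FreeAlgebra ℂ (BGen m)⦄ (h : BRel m ε τ a b) :
    toQuotientFree m ε τ a = toQuotientFree m ε τ b := by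
  cases h with
  | grp_mul g h =>
    simp only [toQuotientFree, map_mul, FreeAlgebra.lift_ι_apply]
    rw [← map_mul, qG_mul_qG]
  | grp_one => simp only [toQuotientFree, FreeAlgebra.lift_ι_apply, qG_one, map_one]
  | gx g =>
    simp only [toQuotientFree, map_mul, map_smul, FreeAlgebra.lift_ι_apply]
    rw [← map_mul, ← map_mul, ← map_smul, qG_mul_qX]
  | gy g =>
    simp only [toQuotientFree, map_mul, map_smul, FreeAlgebra.lift_ι_apply]
    rw [← map_mul, ← map_mul, ← map_smul, qG_mul_qY]
  | comm =>
    have hτ : toQuotientFree m ε τ (ofGrp m τ) = RingQuot.mkAlgHom ℂ (AffineRel m ε τ)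
        (RingQuot.mkAlgHom ℂ (QRel m ε τ) (ofGrpQ m τ)) :=
      map_ofGrp_eq_map_ofGrpQ _ ((RingQuot.mkAlgHom ℂ _).comp (RingQuot.mkAlgHom ℂ _))
        (fun g => by simp [toQuotientFree, qG, qgen]) τ
    simp only [toQuotientFree, map_mul, map_add, FreeAlgebra.lift_ι_apply] at hτ ⊢
    rw [← map_mul, qY_mul_qX, map_add, map_mul, map_mul, map_mul, mkAlgHom_qZ, mkAlgHom_qW,
      mul_one, mul_one, hτ]

def toQuotient : CBH m ε τ →ₐ[ℂ] RingQuot (AffineRel m ε τ) :=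
  RingQuot.liftAlgHom ℂ ⟨toQuotientFree m ε τ, toQuotientFree_rel m ε τ⟩

def ofQuadricFree : FreeAlgebra ℂ (QGen m) →ₐ[ℂ] CBH m ε τ :=
  FreeAlgebra.lift ℂ fun
    | .X => bX m ε τ
    | .Z => 1
    | .Y => bY m ε τ
    | .W => 1
    | .G g => bG m ε τ g

lemma ofQuadricFree_rel ⦃a b : FreeAlgebra ℂ (QGen m)⦄ (h : QRel m ε τ a b) :
    ofQuadricFree m ε τ a = ofQuadricFree m ε τ b := by
  cases h <;>
    simp only [ofQuadricFree, map_mul, map_smul, map_add, map_one, FreeAlgebra.lift_ι_apply,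
      mul_one, one_mul, bG_mul_bG, bG_one, bG_mul_bX, bG_mul_bY]
  case comm =>
    rw [bY_mul_bX, bOf, map_ofGrp_eq_map_ofGrpQ _ (ofQuadricFree m ε τ)
      (fun g => by simp [ofQuadricFree, bG])]
    rfl

def ofQuadric : NQuadric m ε τ →ₐ[ℂ] CBH m ε τ :=
  RingQuot.liftAlgHom ℂ ⟨ofQuadricFree m ε τ, ofQuadricFree_rel m ε τ⟩

lemma ofQuadric_rel ⦃a b : NQuadric m ε τ⦄ (h : AffineRel m ε τ a b) :
    ofQuadric m ε τ a = ofQuadric m ε τ b := by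
  cases h <;> simp [ofQuadric, ofQuadricFree, qZ, qW, qgen]

def ofQuotient : RingQuot (AffineRel m ε τ) →ₐ[ℂ] CBH m ε τ :=
  RingQuot.liftAlgHom ℂ ⟨ofQuadric m ε τ, ofQuadric_rel m ε τ⟩

lemma toQuotient_bX :
    toQuotient m ε τ (bX m ε τ) = RingQuot.mkAlgHom ℂ (AffineRel m ε τ) (qX m ε τ) := by
  simp [toQuotient, toQuotientFree, bX]

lemma toQuotient_bY :
    toQuotient m ε τ (bY m ε τ) = RingQuot.mkAlgHom ℂ (AffineRel m ε τ) (qY m ε τ) := by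
  simp [toQuotient, toQuotientFree, bY]

lemma toQuotient_bG (g : muGroup m) :
    toQuotient m ε τ (bG m ε τ g) =
      RingQuot.mkAlgHom ℂ (AffineRel m ε τ) (qG m ε τ g) := by
  simp [toQuotient, toQuotientFree, bG]

def equivQuotient : CBH m ε τ ≃ₐ[ℂ] RingQuot (AffineRel m ε τ) :=
  AlgEquiv.ofAlgHom (toQuotient m ε τ) (ofQuotient m ε τ)
    (by
      have hZ := mkAlgHom_qZ m ε τ
      have hW := mkAlgHom_qW m ε τ
      simp only [qZ, qW, qgen] at hZ hW
      ext s
      cases s <;> simp [toQuotient, ofQuotient, ofQuadric, toQuotientFree, ofQuadricFree,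
        qX, qY, qG, qgen, bX, bY, bG, hZ, hW])
    (by
      ext s
      cases s <;> simp [toQuotient, ofQuotient, ofQuadric, toQuotientFree, ofQuadricFree,
        qX, qY, qG, qgen, bX, bY, bG])

end CBHQuadric

theorem cbh_iso_quadric_mod_z_w_eq_one_general
    (m : ℕ) (ε : ℂ) (τ : CGrp m) :
    ∃ f : CBH m ε τ ≃+* RingQuot (AffineRel m ε τ),
      f (bX m ε τ) = RingQuot.mkRingHom (AffineRel m ε τ) (qX m ε τ)
      ∧ f (bY m ε τ) = RingQuot.mkRingHom (AffineRel m ε τ) (qY m ε τ)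
      ∧ ∀ g : muGroup m,
          f (bG m ε τ g) = RingQuot.mkRingHom (AffineRel m ε τ) (qG m ε τ g) := by
  refine ⟨(CBHQuadric.equivQuotient m ε τ).toRingEquiv, ?_, ?_, fun g => ?_⟩ <;>
    rw [← RingQuot.mkAlgHom_coe ℂ]
  · exact CBHQuadric.toQuotient_bX m ε τ
  · exact CBHQuadric.toQuotient_bY m ε τ
  · exact CBHQuadric.toQuotient_bG m ε τ g

theorem cbh_iso_quadric_mod_z_w_eq_one
    (m : ℕ) (hm : 0 < m) (ε : ℂ) (hε : IsPrimitiveRoot ε m) (τ : CGrp m) :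
    ∃ f : CBH m ε τ ≃+* RingQuot (AffineRel m ε τ),
      f (bX m ε τ) = RingQuot.mkRingHom (AffineRel m ε τ) (qX m ε τ)
      ∧ f (bY m ε τ) = RingQuot.mkRingHom (AffineRel m ε τ) (qY m ε τ)
      ∧ ∀ g : muGroup m,
          f (bG m ε τ g) = RingQuot.mkRingHom (AffineRel m ε τ) (qG m ε τ g) :=
  cbh_iso_quadric_mod_z_w_eq_one_general m ε τ

end
end

section
/- In the noncommutative quadric algebra Q, the elements z and w are central, and there are algebra isomorphisms Q/zQ ≅ (C[x] ⊗ C[y,w])#μ_m and Q/wQ ≅ (C[x,z] ⊗ C[y])#μ_m; in particular Q/zQ and Q/wQ are independent of τ. -/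
/-!
STATEMENT 12: In the noncommutative quadric algebra `Q`, the elements `z` and
`w` are central, and there are algebra isomorphisms
`Q/zQ ≅ (ℂ[x] ⊗ ℂ[y,w])#μ_m` and `Q/wQ ≅ (ℂ[x,z] ⊗ ℂ[y])#μ_m`; in particular
`Q/zQ` and `Q/wQ` are independent of `τ` (the right-hand sides do not involve
`τ`).  The isomorphisms match the generators.
-/

noncomputable section

/-- Generators of `(ℂ[x] ⊗ ℂ[y,w])#μ_m`. -/
inductive XYWGen (m : ℕ)
  | X : XYWGen m
  | Y : XYWGen m
  | W : XYWGen m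
  | G : muGroup m → XYWGen m

/-- Relations of the smash product `(ℂ[x] ⊗ ℂ[y,w])#μ_m`: `x, y, w` pairwise
commute and `μ_m` acts by `γxγ⁻¹ = ε(γ)x`, `γyγ⁻¹ = ε(γ)⁻¹y`, `γwγ⁻¹ = w`. -/
inductive XYWRel (m : ℕ) (ε : ℂ) :
    FreeAlgebra ℂ (XYWGen m) → FreeAlgebra ℂ (XYWGen m) → Prop
  | grp_mul (g h : muGroup m) :
      XYWRel m ε (FreeAlgebra.ι ℂ (XYWGen.G g) * FreeAlgebra.ι ℂ (XYWGen.G h))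
        (FreeAlgebra.ι ℂ (XYWGen.G (g * h)))
  | grp_one : XYWRel m ε (FreeAlgebra.ι ℂ (XYWGen.G 1)) 1
  | gx (g : muGroup m) :
      XYWRel m ε (FreeAlgebra.ι ℂ (XYWGen.G g) * FreeAlgebra.ι ℂ XYWGen.X)
        (chi m ε g • (FreeAlgebra.ι ℂ XYWGen.X * FreeAlgebra.ι ℂ (XYWGen.G g)))
  | gy (g : muGroup m) :
      XYWRel m ε (FreeAlgebra.ι ℂ (XYWGen.G g) * FreeAlgebra.ι ℂ XYWGen.Y)
        ((chi m ε g)⁻¹ •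
          (FreeAlgebra.ι ℂ XYWGen.Y * FreeAlgebra.ι ℂ (XYWGen.G g)))
  | gw (g : muGroup m) :
      XYWRel m ε (FreeAlgebra.ι ℂ (XYWGen.G g) * FreeAlgebra.ι ℂ XYWGen.W)
        (FreeAlgebra.ι ℂ XYWGen.W * FreeAlgebra.ι ℂ (XYWGen.G g))
  | xy : XYWRel m ε (FreeAlgebra.ι ℂ XYWGen.X * FreeAlgebra.ι ℂ XYWGen.Y)
        (FreeAlgebra.ι ℂ XYWGen.Y * FreeAlgebra.ι ℂ XYWGen.X)
  | xw : XYWRel m ε (FreeAlgebra.ι ℂ XYWGen.X * FreeAlgebra.ι ℂ XYWGen.W)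
        (FreeAlgebra.ι ℂ XYWGen.W * FreeAlgebra.ι ℂ XYWGen.X)
  | yw : XYWRel m ε (FreeAlgebra.ι ℂ XYWGen.Y * FreeAlgebra.ι ℂ XYWGen.W)
        (FreeAlgebra.ι ℂ XYWGen.W * FreeAlgebra.ι ℂ XYWGen.Y)

/-- Generators of `(ℂ[x,z] ⊗ ℂ[y])#μ_m`. -/
inductive XZYGen (m : ℕ)
  | X : XZYGen m
  | Z : XZYGen m
  | Y : XZYGen m
  | G : muGroup m → XZYGen m

/-- Relations of the smash product `(ℂ[x,z] ⊗ ℂ[y])#μ_m`. -/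
inductive XZYRel (m : ℕ) (ε : ℂ) :
    FreeAlgebra ℂ (XZYGen m) → FreeAlgebra ℂ (XZYGen m) → Prop
  | grp_mul (g h : muGroup m) :
      XZYRel m ε (FreeAlgebra.ι ℂ (XZYGen.G g) * FreeAlgebra.ι ℂ (XZYGen.G h))
        (FreeAlgebra.ι ℂ (XZYGen.G (g * h)))
  | grp_one : XZYRel m ε (FreeAlgebra.ι ℂ (XZYGen.G 1)) 1
  | gx (g : muGroup m) :
      XZYRel m ε (FreeAlgebra.ι ℂ (XZYGen.G g) * FreeAlgebra.ι ℂ XZYGen.X)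
        (chi m ε g • (FreeAlgebra.ι ℂ XZYGen.X * FreeAlgebra.ι ℂ (XZYGen.G g)))
  | gy (g : muGroup m) :
      XZYRel m ε (FreeAlgebra.ι ℂ (XZYGen.G g) * FreeAlgebra.ι ℂ XZYGen.Y)
        ((chi m ε g)⁻¹ •
          (FreeAlgebra.ι ℂ XZYGen.Y * FreeAlgebra.ι ℂ (XZYGen.G g)))
  | gz (g : muGroup m) :
      XZYRel m ε (FreeAlgebra.ι ℂ (XZYGen.G g) * FreeAlgebra.ι ℂ XZYGen.Z)
        (FreeAlgebra.ι ℂ XZYGen.Z * FreeAlgebra.ι ℂ (XZYGen.G g))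
  | xy : XZYRel m ε (FreeAlgebra.ι ℂ XZYGen.X * FreeAlgebra.ι ℂ XZYGen.Y)
        (FreeAlgebra.ι ℂ XZYGen.Y * FreeAlgebra.ι ℂ XZYGen.X)
  | xz : XZYRel m ε (FreeAlgebra.ι ℂ XZYGen.X * FreeAlgebra.ι ℂ XZYGen.Z)
        (FreeAlgebra.ι ℂ XZYGen.Z * FreeAlgebra.ι ℂ XZYGen.X)
  | yz : XZYRel m ε (FreeAlgebra.ι ℂ XZYGen.Y * FreeAlgebra.ι ℂ XZYGen.Z)
        (FreeAlgebra.ι ℂ XZYGen.Z * FreeAlgebra.ι ℂ XZYGen.Y)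

/-- The relation `z = 0` on `Q`, presenting `Q/zQ`. -/
inductive ZRel (m : ℕ) (ε : ℂ) (τ : CGrp m) :
    NQuadric m ε τ → NQuadric m ε τ → Prop
  | z : ZRel m ε τ (qZ m ε τ) 0

/-- The relation `w = 0` on `Q`, presenting `Q/wQ`. -/
inductive WRel (m : ℕ) (ε : ℂ) (τ : CGrp m) :
    NQuadric m ε τ → NQuadric m ε τ → Prop
  | w : WRel m ε τ (qW m ε τ) 0

/-!
The defining relations of `Q` say that `z` and `w` commute with every generator, so they are
central. Setting `z = 0` (resp. `w = 0`) kills the right-hand side of `[y,x] = τ·zw`, and what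
remains are exactly the relations of the smash product `(ℂ[x] ⊗ ℂ[y,w])#μ_m` (resp.
`(ℂ[x,z] ⊗ ℂ[y])#μ_m`). Hence both the substitution of generators `Q → (ℂ[x] ⊗ ℂ[y,w])#μ_m`
and the inclusion of generators back into `Q/zQ` respect the relations, and they are inverse
to each other on generators.
-/

open FreeAlgebra

namespace RingQuot

variable {R X : Type*} [CommSemiring R] {r : FreeAlgebra R X → FreeAlgebra R X → Prop}

theorem adjoin_range_mkAlgHom_ι :
    Algebra.adjoin R (Set.range fun x => mkAlgHom R r (ι R x)) = ⊤ := by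
  rw [Set.range_comp' (mkAlgHom R r), ← AlgHom.map_adjoin, adjoin_range_ι, Algebra.map_top,
    AlgHom.range_eq_top]
  exact mkAlgHom_surjective R r

theorem commute_of_forall_commute_ι {c : RingQuot r}
    (h : ∀ x, Commute c (mkAlgHom R r (ι R x))) (q : RingQuot r) : Commute c q :=
  Algebra.commute_of_mem_adjoin_of_forall_mem_commute
    (adjoin_range_mkAlgHom_ι (r := r) ▸ Algebra.mem_top) (by rintro _ ⟨x, rfl⟩; exact h x)

theorem mkAlgHom_eq_of_eqvGen {A : Type*} [Semiring A] [Algebra R A] {s : A → A → Prop}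
    {a b : A} (h : Relation.EqvGen s a b) : mkAlgHom R s a = mkAlgHom R s b := by
  induction h with
  | rel _ _ h => exact mkAlgHom_rel R h
  | refl => rfl
  | symm _ _ _ ih => exact ih.symm
  | trans _ _ _ _ _ ih₁ ih₂ => exact ih₁.trans ih₂

end RingQuot

section Quadric

variable {m : ℕ} {ε : ℂ} {τ : CGrp m}

section Centrality

theorem commute_qgen_of_rel {s t : QGen m} (h : QRel m ε τ (ι ℂ s * ι ℂ t) (ι ℂ t * ι ℂ s)) :
    Commute (qgen m ε τ s) (qgen m ε τ t) := by
  simpa only [qgen, map_mul, commute_iff_eq] using RingQuot.mkAlgHom_rel ℂ h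

theorem qZ_commute (q : NQuadric m ε τ) : Commute (qZ m ε τ) q := by
  refine RingQuot.commute_of_forall_commute_ι (fun s => ?_) q
  cases s with
  | X => exact (commute_qgen_of_rel .xz).symm
  | Z => exact .refl _
  | Y => exact (commute_qgen_of_rel .yz).symm
  | W => exact commute_qgen_of_rel .zw
  | G g => exact (commute_qgen_of_rel (.gz g)).symm

theorem qW_commute (q : NQuadric m ε τ) : Commute (qW m ε τ) q := by
  refine RingQuot.commute_of_forall_commute_ι (fun s => ?_) q
  cases s with
  | X => exact (commute_qgen_of_rel .xw).symm
  | Z => exact (commute_qgen_of_rel .zw).symm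
  | Y => exact (commute_qgen_of_rel .yw).symm
  | W => exact .refl _
  | G g => exact (commute_qgen_of_rel (.gw g)).symm

end Centrality

section QuotientByZ

variable (m) in
def QGen.killZ : QGen m → FreeAlgebra ℂ (XYWGen m)
  | .X => ι ℂ .X
  | .Z => 0
  | .Y => ι ℂ .Y
  | .W => ι ℂ .W
  | .G g => ι ℂ (.G g)

variable (m) in
def XYWGen.incl : XYWGen m → FreeAlgebra ℂ (QGen m)
  | .X => ι ℂ .X
  | .Y => ι ℂ .Y
  | .W => ι ℂ .W
  | .G g => ι ℂ (.G g)

variable (m ε τ) in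
def mkQz : FreeAlgebra ℂ (QGen m) →ₐ[ℂ] RingQuot (ZRel m ε τ) :=
  (RingQuot.mkAlgHom ℂ (ZRel m ε τ)).comp (RingQuot.mkAlgHom ℂ (QRel m ε τ))

@[simp]
theorem mkQz_apply (a : FreeAlgebra ℂ (QGen m)) :
    mkQz m ε τ a = RingQuot.mkAlgHom ℂ _ (RingQuot.mkAlgHom ℂ (QRel m ε τ) a) :=
  rfl

@[simp]
theorem mkQz_ι_Z : RingQuot.mkAlgHom ℂ (ZRel m ε τ) (RingQuot.mkAlgHom ℂ _ (ι ℂ .Z)) = 0 :=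
  (RingQuot.mkAlgHom_rel ℂ ZRel.z).trans (map_zero _)

theorem mkQz_rel ⦃a b : FreeAlgebra ℂ (QGen m)⦄ (h : QRel m ε τ a b) :
    mkQz m ε τ a = mkQz m ε τ b :=
  congrArg (RingQuot.mkAlgHom ℂ (ZRel m ε τ)) (RingQuot.mkAlgHom_rel ℂ h)

theorem mkQz_comm : mkQz m ε τ (ι ℂ .X * ι ℂ .Y) = mkQz m ε τ (ι ℂ .Y * ι ℂ .X) := by
  rw [mkQz_rel .comm]
  simp

theorem QGen.killZ_rel ⦃a b : FreeAlgebra ℂ (QGen m)⦄ (h : QRel m ε τ a b) :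
    Relation.EqvGen (XYWRel m ε) (lift ℂ (QGen.killZ m) a) (lift ℂ (QGen.killZ m) b) := by
  induction h <;>
    simp only [map_mul, map_add, map_smul, map_one, lift_ι_apply, QGen.killZ, mul_zero,
      zero_mul, add_zero] <;>
    first
    | exact .refl _
    | exact .rel _ _ (by constructor)
    | exact .symm _ _ (.rel _ _ (by constructor))

theorem XYWGen.incl_rel ⦃a b : FreeAlgebra ℂ (XYWGen m)⦄ (h : XYWRel m ε a b) :
    mkQz m ε τ (lift ℂ (XYWGen.incl m) a) = mkQz m ε τ (lift ℂ (XYWGen.incl m) b) := by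
  induction h <;>
    simp only [map_mul (lift ℂ (XYWGen.incl m)), map_smul (lift ℂ (XYWGen.incl m)),
      map_one (lift ℂ (XYWGen.incl m)), lift_ι_apply, XYWGen.incl] <;>
    first
    | exact mkQz_rel (by constructor)
    | exact mkQz_comm

variable (m ε τ) in
def quadricToXYW : NQuadric m ε τ →ₐ[ℂ] RingQuot (XYWRel m ε) :=
  RingQuot.liftAlgHom ℂ ⟨(RingQuot.mkAlgHom ℂ _).comp (lift ℂ (QGen.killZ m)),
    fun _ _ h => RingQuot.mkAlgHom_eq_of_eqvGen (QGen.killZ_rel h)⟩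

@[simp]
theorem quadricToXYW_mkAlgHom (a : FreeAlgebra ℂ (QGen m)) :
    quadricToXYW m ε τ (RingQuot.mkAlgHom ℂ _ a) =
      RingQuot.mkAlgHom ℂ _ (lift ℂ (QGen.killZ m) a) :=
  RingQuot.liftAlgHom_mkAlgHom_apply ℂ _ _ _

variable (m ε τ) in
def toXYW : RingQuot (ZRel m ε τ) →ₐ[ℂ] RingQuot (XYWRel m ε) :=
  RingQuot.liftAlgHom ℂ ⟨quadricToXYW m ε τ, by
    rintro _ _ ⟨⟩
    simp [qZ, qgen, QGen.killZ]⟩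

@[simp]
theorem toXYW_mkAlgHom (q : NQuadric m ε τ) :
    toXYW m ε τ (RingQuot.mkAlgHom ℂ _ q) = quadricToXYW m ε τ q :=
  RingQuot.liftAlgHom_mkAlgHom_apply ℂ _ _ _

variable (m ε τ) in
def ofXYW : RingQuot (XYWRel m ε) →ₐ[ℂ] RingQuot (ZRel m ε τ) :=
  RingQuot.liftAlgHom ℂ ⟨(mkQz m ε τ).comp (lift ℂ (XYWGen.incl m)), XYWGen.incl_rel⟩

@[simp]
theorem ofXYW_mkAlgHom (a : FreeAlgebra ℂ (XYWGen m)) :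
    ofXYW m ε τ (RingQuot.mkAlgHom ℂ _ a) = mkQz m ε τ (lift ℂ (XYWGen.incl m) a) :=
  RingQuot.liftAlgHom_mkAlgHom_apply ℂ _ _ _

variable (m ε τ) in
def zEquiv : RingQuot (ZRel m ε τ) ≃ₐ[ℂ] RingQuot (XYWRel m ε) :=
  AlgEquiv.ofAlgHom (toXYW m ε τ) (ofXYW m ε τ)
    (by ext s; cases s <;> simp [XYWGen.incl, QGen.killZ])
    (by ext s; cases s <;> simp [XYWGen.incl, QGen.killZ])

theorem zEquiv_mkRingHom_qgen (s : QGen m) :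
    zEquiv m ε τ (RingQuot.mkRingHom _ (qgen m ε τ s)) =
      RingQuot.mkAlgHom ℂ _ (QGen.killZ m s) := by
  rw [← RingQuot.mkAlgHom_coe ℂ, RingHom.coe_coe]
  simp [zEquiv, qgen]

end QuotientByZ


section QuotientByW

variable (m) in
def QGen.killW : QGen m → FreeAlgebra ℂ (XZYGen m)
  | .X => ι ℂ .X
  | .Z => ι ℂ .Z
  | .Y => ι ℂ .Y
  | .W => 0
  | .G g => ι ℂ (.G g)

variable (m) in
def XZYGen.incl : XZYGen m → FreeAlgebra ℂ (QGen m)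
  | .X => ι ℂ .X
  | .Z => ι ℂ .Z
  | .Y => ι ℂ .Y
  | .G g => ι ℂ (.G g)

variable (m ε τ) in
def mkQw : FreeAlgebra ℂ (QGen m) →ₐ[ℂ] RingQuot (WRel m ε τ) :=
  (RingQuot.mkAlgHom ℂ (WRel m ε τ)).comp (RingQuot.mkAlgHom ℂ (QRel m ε τ))

@[simp]
theorem mkQw_apply (a : FreeAlgebra ℂ (QGen m)) :
    mkQw m ε τ a = RingQuot.mkAlgHom ℂ _ (RingQuot.mkAlgHom ℂ (QRel m ε τ) a) :=
  rfl

@[simp]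
theorem mkQw_ι_W : RingQuot.mkAlgHom ℂ (WRel m ε τ) (RingQuot.mkAlgHom ℂ _ (ι ℂ .W)) = 0 :=
  (RingQuot.mkAlgHom_rel ℂ WRel.w).trans (map_zero _)

theorem mkQw_rel ⦃a b : FreeAlgebra ℂ (QGen m)⦄ (h : QRel m ε τ a b) :
    mkQw m ε τ a = mkQw m ε τ b :=
  congrArg (RingQuot.mkAlgHom ℂ (WRel m ε τ)) (RingQuot.mkAlgHom_rel ℂ h)

theorem mkQw_comm : mkQw m ε τ (ι ℂ .X * ι ℂ .Y) = mkQw m ε τ (ι ℂ .Y * ι ℂ .X) := by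
  rw [mkQw_rel .comm]
  simp

theorem QGen.killW_rel ⦃a b : FreeAlgebra ℂ (QGen m)⦄ (h : QRel m ε τ a b) :
    Relation.EqvGen (XZYRel m ε) (lift ℂ (QGen.killW m) a) (lift ℂ (QGen.killW m) b) := by
  induction h <;>
    simp only [map_mul, map_add, map_smul, map_one, lift_ι_apply, QGen.killW, mul_zero,
      zero_mul, add_zero] <;>
    first
    | exact .refl _
    | exact .rel _ _ (by constructor)
    | exact .symm _ _ (.rel _ _ (by constructor))

theorem XZYGen.incl_rel ⦃a b : FreeAlgebra ℂ (XZYGen m)⦄ (h : XZYRel m ε a b) :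
    mkQw m ε τ (lift ℂ (XZYGen.incl m) a) = mkQw m ε τ (lift ℂ (XZYGen.incl m) b) := by
  induction h <;>
    simp only [map_mul (lift ℂ (XZYGen.incl m)), map_smul (lift ℂ (XZYGen.incl m)),
      map_one (lift ℂ (XZYGen.incl m)), lift_ι_apply, XZYGen.incl] <;>
    first
    | exact mkQw_rel (by constructor)
    | exact mkQw_comm

variable (m ε τ) in
def quadricToXZY : NQuadric m ε τ →ₐ[ℂ] RingQuot (XZYRel m ε) :=
  RingQuot.liftAlgHom ℂ ⟨(RingQuot.mkAlgHom ℂ _).comp (lift ℂ (QGen.killW m)),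
    fun _ _ h => RingQuot.mkAlgHom_eq_of_eqvGen (QGen.killW_rel h)⟩

@[simp]
theorem quadricToXZY_mkAlgHom (a : FreeAlgebra ℂ (QGen m)) :
    quadricToXZY m ε τ (RingQuot.mkAlgHom ℂ _ a) =
      RingQuot.mkAlgHom ℂ _ (lift ℂ (QGen.killW m) a) :=
  RingQuot.liftAlgHom_mkAlgHom_apply ℂ _ _ _

variable (m ε τ) in
def toXZY : RingQuot (WRel m ε τ) →ₐ[ℂ] RingQuot (XZYRel m ε) :=
  RingQuot.liftAlgHom ℂ ⟨quadricToXZY m ε τ, by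
    rintro _ _ ⟨⟩
    simp [qW, qgen, QGen.killW]⟩

@[simp]
theorem toXZY_mkAlgHom (q : NQuadric m ε τ) :
    toXZY m ε τ (RingQuot.mkAlgHom ℂ _ q) = quadricToXZY m ε τ q :=
  RingQuot.liftAlgHom_mkAlgHom_apply ℂ _ _ _

variable (m ε τ) in
def ofXZY : RingQuot (XZYRel m ε) →ₐ[ℂ] RingQuot (WRel m ε τ) :=
  RingQuot.liftAlgHom ℂ ⟨(mkQw m ε τ).comp (lift ℂ (XZYGen.incl m)), XZYGen.incl_rel⟩

@[simp]
theorem ofXZY_mkAlgHom (a : FreeAlgebra ℂ (XZYGen m)) :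
    ofXZY m ε τ (RingQuot.mkAlgHom ℂ _ a) = mkQw m ε τ (lift ℂ (XZYGen.incl m) a) :=
  RingQuot.liftAlgHom_mkAlgHom_apply ℂ _ _ _

variable (m ε τ) in
def wEquiv : RingQuot (WRel m ε τ) ≃ₐ[ℂ] RingQuot (XZYRel m ε) :=
  AlgEquiv.ofAlgHom (toXZY m ε τ) (ofXZY m ε τ)
    (by ext s; cases s <;> simp [XZYGen.incl, QGen.killW])
    (by ext s; cases s <;> simp [XZYGen.incl, QGen.killW])

theorem wEquiv_mkRingHom_qgen (s : QGen m) :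
    wEquiv m ε τ (RingQuot.mkRingHom _ (qgen m ε τ s)) =
      RingQuot.mkAlgHom ℂ _ (QGen.killW m s) := by
  rw [← RingQuot.mkAlgHom_coe ℂ, RingHom.coe_coe]
  simp [wEquiv, qgen]

end QuotientByW

end Quadric

theorem z_w_central_and_quotients_of_quadric_general
    (m : ℕ) (ε : ℂ) (τ : CGrp m) :
    (∀ q : NQuadric m ε τ, qZ m ε τ * q = q * qZ m ε τ
        ∧ qW m ε τ * q = q * qW m ε τ)
    ∧ (∃ f : RingQuot (ZRel m ε τ) ≃+* RingQuot (XYWRel m ε),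
        f (RingQuot.mkRingHom (ZRel m ε τ) (qX m ε τ)) =
          RingQuot.mkAlgHom ℂ (XYWRel m ε) (FreeAlgebra.ι ℂ XYWGen.X)
        ∧ f (RingQuot.mkRingHom (ZRel m ε τ) (qY m ε τ)) =
          RingQuot.mkAlgHom ℂ (XYWRel m ε) (FreeAlgebra.ι ℂ XYWGen.Y)
        ∧ f (RingQuot.mkRingHom (ZRel m ε τ) (qW m ε τ)) =
          RingQuot.mkAlgHom ℂ (XYWRel m ε) (FreeAlgebra.ι ℂ XYWGen.W)
        ∧ ∀ g : muGroup m,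
            f (RingQuot.mkRingHom (ZRel m ε τ) (qG m ε τ g)) =
              RingQuot.mkAlgHom ℂ (XYWRel m ε) (FreeAlgebra.ι ℂ (XYWGen.G g)))
    ∧ (∃ f : RingQuot (WRel m ε τ) ≃+* RingQuot (XZYRel m ε),
        f (RingQuot.mkRingHom (WRel m ε τ) (qX m ε τ)) =
          RingQuot.mkAlgHom ℂ (XZYRel m ε) (FreeAlgebra.ι ℂ XZYGen.X)
        ∧ f (RingQuot.mkRingHom (WRel m ε τ) (qY m ε τ)) =
          RingQuot.mkAlgHom ℂ (XZYRel m ε) (FreeAlgebra.ι ℂ XZYGen.Y)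
        ∧ f (RingQuot.mkRingHom (WRel m ε τ) (qZ m ε τ)) =
          RingQuot.mkAlgHom ℂ (XZYRel m ε) (FreeAlgebra.ι ℂ XZYGen.Z)
        ∧ ∀ g : muGroup m,
            f (RingQuot.mkRingHom (WRel m ε τ) (qG m ε τ g)) =
              RingQuot.mkAlgHom ℂ (XZYRel m ε) (FreeAlgebra.ι ℂ (XZYGen.G g))) := by
  exact ⟨fun q => ⟨qZ_commute q, qW_commute q⟩,
    ⟨(zEquiv m ε τ).toRingEquiv, zEquiv_mkRingHom_qgen .X, zEquiv_mkRingHom_qgen .Y,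
      zEquiv_mkRingHom_qgen .W, fun g => zEquiv_mkRingHom_qgen (.G g)⟩,
    ⟨(wEquiv m ε τ).toRingEquiv, wEquiv_mkRingHom_qgen .X, wEquiv_mkRingHom_qgen .Y,
      wEquiv_mkRingHom_qgen .Z, fun g => wEquiv_mkRingHom_qgen (.G g)⟩⟩

theorem z_w_central_and_quotients_of_quadric
    (m : ℕ) (hm : 0 < m) (ε : ℂ) (hε : IsPrimitiveRoot ε m) (τ : CGrp m) :
    (∀ q : NQuadric m ε τ, qZ m ε τ * q = q * qZ m ε τ
        ∧ qW m ε τ * q = q * qW m ε τ)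
    ∧ (∃ f : RingQuot (ZRel m ε τ) ≃+* RingQuot (XYWRel m ε),
        f (RingQuot.mkRingHom (ZRel m ε τ) (qX m ε τ)) =
          RingQuot.mkAlgHom ℂ (XYWRel m ε) (FreeAlgebra.ι ℂ XYWGen.X)
        ∧ f (RingQuot.mkRingHom (ZRel m ε τ) (qY m ε τ)) =
          RingQuot.mkAlgHom ℂ (XYWRel m ε) (FreeAlgebra.ι ℂ XYWGen.Y)
        ∧ f (RingQuot.mkRingHom (ZRel m ε τ) (qW m ε τ)) =
          RingQuot.mkAlgHom ℂ (XYWRel m ε) (FreeAlgebra.ι ℂ XYWGen.W)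
        ∧ ∀ g : muGroup m,
            f (RingQuot.mkRingHom (ZRel m ε τ) (qG m ε τ g)) =
              RingQuot.mkAlgHom ℂ (XYWRel m ε) (FreeAlgebra.ι ℂ (XYWGen.G g)))
    ∧ (∃ f : RingQuot (WRel m ε τ) ≃+* RingQuot (XZYRel m ε),
        f (RingQuot.mkRingHom (WRel m ε τ) (qX m ε τ)) =
          RingQuot.mkAlgHom ℂ (XZYRel m ε) (FreeAlgebra.ι ℂ XZYGen.X)
        ∧ f (RingQuot.mkRingHom (WRel m ε τ) (qY m ε τ)) =
          RingQuot.mkAlgHom ℂ (XZYRel m ε) (FreeAlgebra.ι ℂ XZYGen.Y)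
        ∧ f (RingQuot.mkRingHom (WRel m ε τ) (qZ m ε τ)) =
          RingQuot.mkAlgHom ℂ (XZYRel m ε) (FreeAlgebra.ι ℂ XZYGen.Z)
        ∧ ∀ g : muGroup m,
            f (RingQuot.mkRingHom (WRel m ε τ) (qG m ε τ g)) =
              RingQuot.mkAlgHom ℂ (XZYRel m ε) (FreeAlgebra.ι ℂ (XZYGen.G g))) :=
  z_w_central_and_quotients_of_quadric_general m ε τ

end
end

section
/- Ker p_μ(x) = Ker(x − μ) ⊗_{CΓ_μ} CΓ for any right B_τ-module M on which x acts: that is, the kernel of p_μ(x) on M decomposes as ⊕_{γ ∈ Γ/Γ_μ} Ker(x − μ)·γ^{-1}, where Γ acts on M via CΓ ⊂ B_τ. -/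
/-!
STATEMENT 16: For any right `B_τ`-module `M`,
`Ker p_μ(x) = Ker(x − μ) ⊗_{ℂΓ_μ} ℂΓ`; i.e. the kernel of `p_μ(x)` on `M`
decomposes as the (internal) direct sum `⊕_{γ ∈ Γ/Γ_μ} Ker(x − μ)·γ^{-1}`,
where `Γ = μ_m` acts on `M` via `ℂΓ ⊂ B_τ`, `Γ_μ` is the stabilizer of `μ`
(under `γ·μ = ε(γ)μ`), and `p_μ(x) = x^m − μ^m` if `μ ≠ 0`, `p_0(x) = x`.
-/

noncomputable section

lemma chi_mul (m : ℕ) (hm : 0 < m) (ε : ℂ) (hε : ε ^ m = 1) (g h : muGroup m) :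
    chi m ε (g * h) = chi m ε g * chi m ε h := by
  haveI : NeZero m := ⟨hm.ne'⟩
  have key : ∀ n : ℕ, ε ^ n = ε ^ (n % m) := by
    intro n
    conv_lhs => rw [← Nat.div_add_mod n m]
    rw [pow_add, pow_mul, hε, one_pow, one_mul]
  show ε ^ (Multiplicative.toAdd g + Multiplicative.toAdd h).val = _
  rw [ZMod.val_add, ← key, pow_add]
  rfl

lemma chi_one (m : ℕ) (hm : 0 < m) (ε : ℂ) : chi m ε 1 = 1 := by
  haveI : NeZero m := ⟨hm.ne'⟩
  show ε ^ (0 : ZMod m).val = 1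
  rw [ZMod.val_zero, pow_zero]

/-- The stabilizer `Γ_μ` of `μ` in `Γ = μ_m` (acting by `γ·μ = ε(γ)μ`). -/
def stab (m : ℕ) (hm : 0 < m) (ε : ℂ) (hε : ε ^ m = 1) (μ : ℂ) :
    Subgroup (muGroup m) where
  carrier := {g | chi m ε g * μ = μ}
  mul_mem' := by
    intro g h hg hh
    simp only [Set.mem_setOf_eq] at *
    rw [chi_mul m hm ε hε, mul_assoc, hh, hg]
  one_mem' := by
    simp only [Set.mem_setOf_eq]
    rw [chi_one m hm ε, one_mul]
  inv_mem' := by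
    intro g hg
    simp only [Set.mem_setOf_eq] at *
    conv_lhs => rw [← hg]
    rw [← mul_assoc, ← chi_mul m hm ε hε, inv_mul_cancel, chi_one m hm ε,
      one_mul]

/-- The minimal `Γ`-semiinvariant polynomial `p_μ` vanishing on the orbit
`Γ·μ`, as an element of `B_τ`. -/
def pmu (m : ℕ) (ε : ℂ) (τ : CGrp m) (μ : ℂ) : CBH m ε τ :=
  if μ = 0 then bX m ε τ
  else bX m ε τ ^ m - algebraMap ℂ (CBH m ε τ) (μ ^ m)

/-- The kernel of the right action of an element `b ∈ B_τ` on a right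
`B_τ`-module `M`, as an additive subgroup. -/
def kerOf (m : ℕ) (ε : ℂ) (τ : CGrp m) (b : CBH m ε τ) (M : Type*)
    [AddCommGroup M] [Module (CBH m ε τ)ᵐᵒᵖ M] : AddSubgroup M where
  carrier := {v | MulOpposite.op b • v = 0}
  add_mem' := by
    intro a c ha hc
    simp only [Set.mem_setOf_eq] at *
    rw [smul_add, ha, hc, add_zero]
  zero_mem' := smul_zero _
  neg_mem' := by
    intro a ha
    simp only [Set.mem_setOf_eq] at *
    rw [smul_neg, ha, neg_zero]

/-- The translate `Ker(x−μ)·γ⁻¹` of `Ker(x−μ)` by the right action of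
`γ⁻¹ ∈ Γ`. -/
def kerTranslate (m : ℕ) (ε : ℂ) (τ : CGrp m) (μ : ℂ) (M : Type*)
    [AddCommGroup M] [Module (CBH m ε τ)ᵐᵒᵖ M] (g : muGroup m) :
    AddSubgroup M :=
  AddSubgroup.map
    (AddMonoidHom.mk' (fun v => MulOpposite.op (bG m ε τ g⁻¹) • v)
      (fun a b => smul_add _ a b))
    (kerOf m ε τ (bX m ε τ - algebraMap ℂ (CBH m ε τ) μ) M)

open Polynomial MulOpposite

/-! Through `ℂ ⊂ B_τ`, `M` is a complex vector space on which `x` acts by a linear map `F`.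
The relation `γ x = ε(γ) x γ` turns `Ker(x − μ)·γ⁻¹` into the eigenspace of `F` for the eigenvalue
`ε(γ⁻¹) μ`. Over `Γ/Γ_μ` these eigenvalues run through the orbit `Γμ` without repetition, so the
eigenspaces are independent, and `p_μ = ∏_{a ∈ Γμ} (X − a)` has simple roots, so the kernel of
`p_μ(F)` is the sum of these eigenspaces. -/

namespace Submodule

variable {R M : Type*} [Ring R] [AddCommGroup M] [Module R M]

theorem toAddSubgroup_iSup {ι : Sort*} (p : ι → Submodule R M) :
    (⨆ i, p i).toAddSubgroup = ⨆ i, (p i).toAddSubgroup :=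
  AddSubgroup.toIntSubmodule.injective <| by
    simp only [toIntSubmodule_toAddSubgroup, restrictScalars_iSup,
      AddSubgroup.toIntSubmodule.map_iSup]

theorem iSupIndep_toAddSubgroup {ι : Type*} {p : ι → Submodule R M} (hp : iSupIndep p) :
    iSupIndep fun i => (p i).toAddSubgroup := by
  intro i
  simp only [← toAddSubgroup_iSup]
  exact AddSubgroup.disjoint_def.2 fun hx hy => disjoint_def.1 (hp i) _ hx hy

end Submodule

theorem Module.End.ker_aeval_prod_X_sub_C {K V : Type*} [Field K] [AddCommGroup V] [Module K V]
    (f : Module.End K V) (s : Finset K) :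
    LinearMap.ker (aeval f (∏ a ∈ s, (X - C a))) = ⨆ a ∈ s, f.eigenspace a := by
  classical
  induction s using Finset.induction_on with
  | empty => simp [Module.End.one_eq_id]
  | insert a s ha ih =>
    have hcop : IsCoprime (X - C a) (∏ b ∈ s, (X - C b)) :=
      IsCoprime.prod_right fun b hb =>
        isCoprime_X_sub_C_of_isUnit_sub (sub_ne_zero.2 (ne_of_mem_of_not_mem hb ha).symm).isUnit
    rw [Finset.prod_insert ha, ← sup_ker_aeval_eq_ker_aeval_mul_of_coprime f hcop, ih,
      Finset.iSup_insert, eigenspace_def, map_sub, aeval_X, aeval_C,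
      Algebra.algebraMap_eq_smul_one]

section CBH

variable {m : ℕ} {ε : ℂ} {τ : CGrp m}

theorem bG_mul (g h : muGroup m) : bG m ε τ g * bG m ε τ h = bG m ε τ (g * h) := by
  simpa only [map_mul, bG] using RingQuot.mkAlgHom_rel ℂ (BRel.grp_mul (ε := ε) (τ := τ) g h)

theorem bG_one : bG m ε τ 1 = 1 := by
  simpa only [map_one, bG] using
    RingQuot.mkAlgHom_rel ℂ (BRel.grp_one (m := m) (ε := ε) (τ := τ))

theorem bG_mul_bX (g : muGroup m) :
    bG m ε τ g * bX m ε τ = chi m ε g • (bX m ε τ * bG m ε τ g) := by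
  simpa only [map_mul, map_smul, bG, bX] using
    RingQuot.mkAlgHom_rel ℂ (BRel.gx (ε := ε) (τ := τ) g)

theorem bG_mul_bX_sub_algebraMap (g : muGroup m) (c : ℂ) :
    bG m ε τ g * (bX m ε τ - algebraMap ℂ _ (chi m ε g * c))
      = chi m ε g • ((bX m ε τ - algebraMap ℂ _ c) * bG m ε τ g) := by
  rw [mul_sub, bG_mul_bX, sub_mul, smul_sub, ← Algebra.commutes, map_mul, Algebra.smul_def,
    Algebra.smul_def, mul_assoc]

variable {M : Type*} [AddCommGroup M] [Module (CBH m ε τ)ᵐᵒᵖ M]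

theorem op_bG_smul_mem_kerOf {g : muGroup m} {c : ℂ} {v : M}
    (hv : v ∈ kerOf m ε τ (bX m ε τ - algebraMap ℂ _ c) M) :
    op (bG m ε τ g) • v ∈ kerOf m ε τ (bX m ε τ - algebraMap ℂ _ (chi m ε g * c)) M := by
  change op _ • op _ • v = 0
  rw [← mul_smul, ← op_mul, bG_mul_bX_sub_algebraMap, Algebra.smul_def, Algebra.commutes,
    mul_assoc, op_mul, mul_smul]
  change _ • (op (bX m ε τ - algebraMap ℂ _ c) • v) = 0
  rw [hv, smul_zero]

theorem kerTranslate_eq_kerOf (hm : 0 < m) (hε : ε ^ m = 1) (μ : ℂ) (g : muGroup m) :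
    kerTranslate m ε τ μ M g = kerOf m ε τ (bX m ε τ - algebraMap ℂ _ (chi m ε g⁻¹ * μ)) M := by
  ext v
  constructor
  · rintro ⟨w, hw, rfl⟩
    exact op_bG_smul_mem_kerOf hw
  · intro hv
    refine ⟨op (bG m ε τ g) • v, ?_, ?_⟩
    · simpa [← mul_assoc, ← chi_mul m hm ε hε, chi_one m hm] using op_bG_smul_mem_kerOf (g := g) hv
    · change op (bG m ε τ g⁻¹) • op (bG m ε τ g) • v = v
      rw [← mul_smul, ← op_mul, bG_mul, mul_inv_cancel, bG_one, op_one, one_smul]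

section Linear

variable [Module ℂ M] [IsScalarTower ℂ (CBH m ε τ)ᵐᵒᵖ M]

theorem kerOf_aeval (p : ℂ[X]) :
    kerOf m ε τ (aeval (bX m ε τ) p) M
      = (LinearMap.ker (aeval (Algebra.lsmul ℂ ℂ M (op (bX m ε τ))) p)).toAddSubgroup := by
  rw [aeval_algHom_apply, aeval_op_apply]
  rfl

theorem kerOf_sub_algebraMap_eq_eigenspace (c : ℂ) :
    kerOf m ε τ (bX m ε τ - algebraMap ℂ _ c) M
      = ((Algebra.lsmul ℂ ℂ M (op (bX m ε τ))).eigenspace c).toAddSubgroup := by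
  have h := kerOf_aeval (ε := ε) (τ := τ) (M := M) (X - C c)
  simpa only [map_sub, aeval_X, aeval_C, Module.End.eigenspace_def,
    Algebra.algebraMap_eq_smul_one] using h

end Linear

def rootOrbit (m : ℕ) (ε μ : ℂ) : Finset ℂ := (Finset.range m).image fun j => ε ^ j * μ

theorem pmu_eq_aeval_prod_rootOrbit (hm : 0 < m) (hε : IsPrimitiveRoot ε m) (μ : ℂ) :
    pmu m ε τ μ = aeval (bX m ε τ) (∏ a ∈ rootOrbit m ε μ, (X - C a)) := by
  by_cases hμ : μ = 0
  · subst hμ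
    simp [pmu, rootOrbit, Finset.image_const (Finset.nonempty_range_iff.2 hm.ne')]
  · have hinj : Set.InjOn (fun j => ε ^ j * μ) (Finset.range m) := fun i hi j hj hij =>
      hε.pow_inj (Finset.mem_range.1 hi) (Finset.mem_range.1 hj) (mul_right_cancel₀ hμ hij)
    rw [rootOrbit, Finset.prod_image hinj, ← X_pow_sub_C_eq_prod hε hm rfl]
    simp [pmu, hμ]

theorem chi_inv_mul_eq_chi_inv_mul_iff (hm : 0 < m) (hε : ε ^ m = 1) {μ : ℂ} {g h : muGroup m} :
    chi m ε g⁻¹ * μ = chi m ε h⁻¹ * μ ↔ (g : muGroup m ⧸ stab m hm ε hε μ) = h := by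
  have hunit : chi m ε h * chi m ε h⁻¹ = 1 := by
    rw [← chi_mul m hm ε hε, mul_inv_cancel, chi_one m hm]
  rw [QuotientGroup.eq]
  change _ ↔ chi m ε (g⁻¹ * h) * μ = μ
  rw [chi_mul m hm ε hε]
  constructor <;> intro H
  · linear_combination chi m ε h * H + μ * hunit
  · linear_combination chi m ε h⁻¹ * H - chi m ε g⁻¹ * μ * hunit

section Representatives

variable (hm : 0 < m) (hε : IsPrimitiveRoot ε m) {μ : ℂ}
  {reps : (muGroup m ⧸ stab m hm ε hε.pow_eq_one μ) → muGroup m}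

theorem injective_chi_inv_reps_mul
    (hreps : ∀ q, (reps q : muGroup m ⧸ stab m hm ε hε.pow_eq_one μ) = q) :
    Function.Injective fun q => chi m ε (reps q)⁻¹ * μ :=
  fun a b hab => by
    rw [← hreps a, ← hreps b]
    exact (chi_inv_mul_eq_chi_inv_mul_iff hm hε.pow_eq_one).1 hab

theorem coe_rootOrbit_eq_range
    (hreps : ∀ q, (reps q : muGroup m ⧸ stab m hm ε hε.pow_eq_one μ) = q) :
    (rootOrbit m ε μ : Set ℂ) = Set.range fun q => chi m ε (reps q)⁻¹ * μ := by
  have : NeZero m := ⟨hm.ne'⟩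
  ext a
  simp only [rootOrbit, Finset.coe_image, Finset.coe_range, Set.mem_image, Set.mem_Iio,
    Set.mem_range]
  constructor
  · rintro ⟨j, hj, rfl⟩
    refine ⟨QuotientGroup.mk (Multiplicative.ofAdd (j : ZMod m))⁻¹, ?_⟩
    rw [(chi_inv_mul_eq_chi_inv_mul_iff hm hε.pow_eq_one).2 (hreps _), inv_inv]
    simp [chi, ZMod.val_natCast_of_lt hj]
  · rintro ⟨q, rfl⟩
    exact ⟨_, ZMod.val_lt _, rfl⟩

end Representatives

end CBH

theorem kernel_of_pmu_decomposes_along_orbit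
    (m : ℕ) (hm : 0 < m) (ε : ℂ) (hε : IsPrimitiveRoot ε m) (τ : CGrp m)
    (μ : ℂ) (M : Type*) [AddCommGroup M] [Module (CBH m ε τ)ᵐᵒᵖ M]
    (reps : (muGroup m ⧸ stab m hm ε hε.pow_eq_one μ) → muGroup m)
    (hreps : ∀ q, QuotientGroup.mk (s := stab m hm ε hε.pow_eq_one μ)
        (reps q) = q) :
    (kerOf m ε τ (pmu m ε τ μ) M = ⨆ q, kerTranslate m ε τ μ M (reps q))
    ∧ (iSupIndep fun q => kerTranslate m ε τ μ M (reps q)) := by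
  let : Module ℂ M := Module.compHom M (algebraMap ℂ (CBH m ε τ)ᵐᵒᵖ)
  have : IsScalarTower ℂ (CBH m ε τ)ᵐᵒᵖ M := .of_algebraMap_smul fun _ _ => rfl
  set F := Algebra.lsmul ℂ ℂ M (op (bX m ε τ))
  have htranslate : ∀ q, kerTranslate m ε τ μ M (reps q)
      = (F.eigenspace (chi m ε (reps q)⁻¹ * μ)).toAddSubgroup := fun q => by
    rw [kerTranslate_eq_kerOf hm hε.pow_eq_one, kerOf_sub_algebraMap_eq_eigenspace]
  simp only [htranslate]
  refine ⟨?_, Submodule.iSupIndep_toAddSubgroup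
    (F.eigenspaces_iSupIndep.comp (injective_chi_inv_reps_mul hm hε hreps))⟩
  rw [pmu_eq_aeval_prod_rootOrbit hm hε, kerOf_aeval, Module.End.ker_aeval_prod_X_sub_C,
    ← Submodule.toAddSubgroup_iSup, ← iSup_range (g := F.eigenspace),
    ← coe_rootOrbit_eq_range hm hε hreps]
  simp only [Finset.mem_coe, F]

end
end
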